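/- arXiv:2207.11498 — 5 statements merged into one kernel-verified Lean document; each statement's English description precedes it below -/
import Mathlib

section
/- Let β > 0 and let μ be the probability measure on the unit circle given by dμ = (1/Z)(1 − cos θ)^{1/β} dθ/(2π), where Z = ∫₀^{2π} (1 − cos θ)^{1/β} dθ/(2π). For every integer n ≥ 1, if p_n is a monic polynomial of degree n with complex coefficients such that ∫₀^{2π} p_n(e^{iθ}) e^{−ikθ} dμ(θ) = 0 for all integers 0 ≤ k < n (i.e. p_n is orthogonal in L²(μ) to all polynomials of degree less than n), then p_n(0) = 1/(1 + nβ). Equivalently, the Verblunsky coefficients of μ are α_n = 1/(1 + nβ). -/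
open Finset

noncomputable def vcP (a : ℝ) (k : ℕ) : ℝ := ∏ i ∈ range k, (a + i)

lemma vcP_succ (a : ℝ) (k : ℕ) : vcP a (k+1) = vcP a k * (a + k) := by
  simp [vcP, Finset.prod_range_succ]

lemma vcP_pos {a : ℝ} (ha : 0 < a) (k : ℕ) : 0 < vcP a k := by
  refine Finset.prod_pos fun i _ => ?_
  positivity

noncomputable def vcL (a : ℝ) (n m : ℕ) : ℝ :=
  (n-1).choose m * vcP a m * vcP a (n - m)

lemma vcL_zero {a : ℝ} (n : ℕ) : vcL a n 0 = vcP a n := by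
  simp [vcL, vcP]

lemma vcL_pos {a : ℝ} (ha : 0 < a) {n m : ℕ} (h : m < n) : 0 < vcL a n m := by
  have : 0 < (n-1).choose m := Nat.choose_pos (by omega)
  have := vcP_pos ha m
  have := vcP_pos ha (n - m)
  have : (0:ℝ) < (n-1).choose m := by exact_mod_cast ‹0 < (n-1).choose m›
  unfold vcL; positivity

lemma vcL_of_ge {a : ℝ} {n m : ℕ} (hn : 1 ≤ n) (h : n ≤ m) : vcL a n m = 0 := by
  have : n - 1 < m := by omega
  simp [vcL, Nat.choose_eq_zero_of_lt this]

-- symmetry: (a + (n-1-m)) * λ(n, n-1-m) = (a+m) * λ(n,m)  for m < n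
lemma vcL_symm {a : ℝ} {n m : ℕ} (h : m < n) :
    (a + ((n-1-m : ℕ) : ℝ)) * vcL a n (n-1-m) = (a + m) * vcL a n m := by
  have h1 : (n-1) - (n-1-m) = m := by omega
  have h2 : n - (n-1-m) = m + 1 := by omega
  have h3 : (n-1-m) + 1 = n - m := by omega
  have hch : (n-1).choose (n-1-m) = (n-1).choose m := by
    rw [← h1, Nat.choose_symm (by omega)]
  rw [vcL, vcL, hch, h2]
  rw [show vcP a (m+1) = vcP a m * (a + m) from vcP_succ a m]
  rw [show vcP a (n - m) = vcP a (n-1-m) * (a + ((n-1-m:ℕ):ℝ)) by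
    rw [← h3, vcP_succ]]
  ring

-- ratio: (m+1) * (a + (n-1-m)) * λ(n, m+1) = (n-1-m) * (a+m) * λ(n,m)  for m < n
lemma vcL_ratio {a : ℝ} {n m : ℕ} (h : m < n) :
    ((m:ℝ)+1) * (a + ((n-1-m : ℕ) : ℝ)) * vcL a n (m+1)
      = ((n-1-m : ℕ) : ℝ) * (a + m) * vcL a n m := by
  have hch : ((n-1).choose (m+1) : ℝ) * (m+1) = (n-1).choose m * ((n-1-m : ℕ) : ℝ) := by
    exact_mod_cast congrArg (Nat.cast : ℕ → ℝ) (Nat.choose_succ_right_eq (n-1) m)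
  rcases Nat.lt_or_ge (m+1) n with hm1 | hm1
  · have h4 : n - (m+1) + 1 = n - m := by omega
    have h5 : (n - (m+1) : ℕ) = (n-1-m : ℕ) := by omega
    rw [vcL, vcL]
    rw [show vcP a (m+1) = vcP a m * (a + m) from vcP_succ a m]
    rw [show vcP a (n - m) = vcP a (n - (m+1)) * (a + ((n-(m+1):ℕ):ℝ)) by
      rw [← h4, vcP_succ]]
    rw [h5]
    linear_combination (a + ((n-1-m:ℕ):ℝ)) * (a + (m:ℝ)) * vcP a m * vcP a (n-1-m) * hch
  · have hmn : m + 1 = n := by omega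
    have h0 : n - 1 - m = 0 := by omega
    rw [h0, vcL_of_ge (by omega) (by omega : n ≤ m + 1)]
    simp

-- structure: a * λ(n, n-1-m) = (a+m) * λ(n,m) - (m+1) * λ(n,m+1)  for m < n
lemma vcL_struct {a : ℝ} (ha : 0 < a) {n m : ℕ} (h : m < n) :
    a * vcL a n (n-1-m) = (a + m) * vcL a n m - ((m:ℝ)+1) * vcL a n (m+1) := by
  have hpos : (0:ℝ) < a + ((n-1-m : ℕ) : ℝ) := by positivity
  have key : (a + ((n-1-m : ℕ) : ℝ)) * (a * vcL a n (n-1-m))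
      = (a + ((n-1-m : ℕ) : ℝ)) * ((a + m) * vcL a n m - ((m:ℝ)+1) * vcL a n (m+1)) := by
    have hs := vcL_symm (a := a) h
    have hr := vcL_ratio (a := a) h
    nlinarith [hs, hr]
  exact mul_left_cancel₀ (ne_of_gt hpos) key

-- recursion in n : λ(n+1, m) = (a+n) λ(n,m) + a λ(n, n-m)  for m ≤ n, 1 ≤ n
lemma vcL_rec {a : ℝ} {n m : ℕ} (hn : 1 ≤ n) (h : m ≤ n) :
    vcL a (n+1) m = (a + n) * vcL a n m + a * vcL a n (n-m) := by
  rcases Nat.eq_zero_or_pos m with rfl | hm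
  · rw [Nat.sub_zero, vcL_of_ge hn le_rfl, vcL_zero, vcL_zero, vcP_succ]
    ring
  · -- Pascal
    obtain ⟨n', rfl⟩ : ∃ n', n = n' + 1 := ⟨n-1, by omega⟩
    obtain ⟨m', rfl⟩ : ∃ m', m = m' + 1 := ⟨m-1, by omega⟩
    have hpas : (n'+1).choose (m'+1) = n'.choose m' + n'.choose (m'+1) :=
      Nat.choose_succ_succ n' m'
    have hsy : n'.choose (n' - m') = n'.choose m' := Nat.choose_symm (by omega)
    have e5 : ((n' - m' : ℕ) : ℝ) = (n':ℝ) - m' := Nat.cast_sub (by omega)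
    have hcr : (n'.choose (m'+1) : ℝ) * ((m':ℝ)+1)
        = (n'.choose m' : ℝ) * ((n':ℝ) - m') := by
      rw [← e5]
      exact_mod_cast congrArg (Nat.cast : ℕ → ℝ) (Nat.choose_succ_right_eq n' m')
    rw [vcL, vcL, vcL, show (n'+1+1) - 1 = n'+1 by omega,
      show (n'+1) - 1 = n' by omega,
      show (n'+1) - (m'+1) = n' - m' by omega,
      show (n'+1+1) - (m'+1) = (n' - m') + 1 by omega,
      hsy, hpas, vcP_succ a (n' - m'),
      show (n'+1) - (n' - m') = m' + 1 by omega, e5]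
    push_cast
    linear_combination (-(vcP a (m'+1) * vcP a (n' - m'))) * hcr


open Real Set

noncomputable def vcW (a : ℝ) (θ : ℝ) : ℝ := (1 - Real.cos θ) ^ a

lemma vcW_cont {a : ℝ} (ha : 0 < a) : Continuous (vcW a) := by
  refine Continuous.rpow_const (by continuity) fun x => Or.inr ha.le

lemma one_sub_cos_pos {θ : ℝ} (h0 : 0 < θ) (h2 : θ < 2 * π) : 0 < 1 - Real.cos θ := by
  have hle : Real.cos θ ≤ 1 := Real.cos_le_one θ
  rcases eq_or_lt_of_le hle with heq | hlt
  · exfalso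
    rw [Real.cos_eq_one_iff] at heq
    obtain ⟨n, hn⟩ := heq
    have hpi := Real.pi_pos
    rcases lt_trichotomy n 0 with h | h | h
    · have hr : (n : ℝ) ≤ -1 := by exact_mod_cast Int.le_sub_one_of_lt h
      nlinarith
    · rw [h] at hn; push_cast at hn; linarith
    · have hr : (1 : ℝ) ≤ (n : ℝ) := by exact_mod_cast h
      nlinarith
  · linarith

lemma vcW_pos {a : ℝ} {θ : ℝ} (h0 : 0 < θ) (h2 : θ < 2 * π) : 0 < vcW a θ :=
  Real.rpow_pos_of_pos (one_sub_cos_pos h0 h2) a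

lemma vcW_symm (a : ℝ) (θ : ℝ) : vcW a (2 * π - θ) = vcW a θ := by
  unfold vcW; rw [Real.cos_two_pi_sub]

noncomputable def vcM (a : ℝ) (j : ℤ) : ℂ :=
  ∫ θ in (0:ℝ)..(2*π), Complex.exp (j * θ * Complex.I) * ((vcW a θ : ℝ) : ℂ)

lemma vcM_integrand_cont (a : ℝ) (ha : 0 < a) (j : ℤ) :
    Continuous fun θ : ℝ => Complex.exp (j * θ * Complex.I) * ((vcW a θ : ℝ) : ℂ) := by
  refine Continuous.mul ?_ ?_
  · exact Complex.continuous_exp.comp (by continuity)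
  · exact Complex.continuous_ofReal.comp (vcW_cont ha)

lemma vcM_symm {a : ℝ} (ha : 0 < a) (j : ℤ) : vcM a (-j) = vcM a j := by
  have h := intervalIntegral.integral_comp_sub_left (a := (0:ℝ)) (b := 2*π)
    (fun θ : ℝ => Complex.exp (j * θ * Complex.I) * ((vcW a θ : ℝ) : ℂ)) (2 * π)
  rw [sub_self, sub_zero] at h
  -- h : ∫ x in 0..2π, f (2π - x) = ∫ x in 0..2π, f x  (with bounds 0..2π after rewriting)
  unfold vcM
  rw [← h]
  refine intervalIntegral.integral_congr fun θ _ => ?_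
  rw [vcW_symm]
  congr 1
  push_cast
  rw [show ((j:ℂ)) * (2 * (π:ℝ) - (θ:ℝ)) * Complex.I
      = (j : ℂ) * (2 * (π:ℝ) * Complex.I) + (-(j:ℂ)) * (θ:ℝ) * Complex.I by ring,
    Complex.exp_add, Complex.exp_int_mul_two_pi_mul_I, one_mul]

lemma exp_theta_I_hasDeriv (c : ℂ) (θ : ℝ) :
    HasDerivAt (fun t : ℝ => Complex.exp (c * t * Complex.I))
      (c * Complex.I * Complex.exp (c * θ * Complex.I)) θ := by
  have h1 : HasDerivAt (fun z : ℂ => Complex.exp (c * z * Complex.I))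
      (Complex.exp (c * θ * Complex.I) * (c * Complex.I)) (θ : ℂ) := by
    have hlin : HasDerivAt (fun z : ℂ => c * z * Complex.I) (c * Complex.I) (θ : ℂ) := by
      simpa using ((hasDerivAt_id ((θ:ℝ) : ℂ)).const_mul c).mul_const Complex.I
    simpa using hlin.cexp
  simpa [mul_comm] using h1.comp_ofReal

lemma sin_mul_exp_sub_one (θ : ℝ) :
    ((Real.sin θ : ℝ) : ℂ) * (Complex.exp (θ * Complex.I) - 1)
      = Complex.I * (Complex.exp (θ * Complex.I) + 1) * ((1 - Real.cos θ : ℝ) : ℂ) := by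
  rw [Complex.exp_mul_I]
  push_cast
  linear_combination Complex.I * (Complex.sin_sq_add_cos_sq (θ:ℂ)) + (Complex.sin (θ:ℂ) * Complex.cos (θ:ℂ) - Complex.sin (θ:ℂ)) * Complex.I_sq

lemma vcW_hasDeriv {a : ℝ} (ha : 0 < a) {θ : ℝ} (h0 : 0 < θ) (h2 : θ < 2 * π) :
    HasDerivAt (vcW a) (a * (1 - Real.cos θ) ^ (a - 1) * Real.sin θ) θ := by
  have hx : (0:ℝ) < 1 - Real.cos θ := one_sub_cos_pos h0 h2
  have hcos : HasDerivAt (fun t : ℝ => 1 - Real.cos t) (Real.sin θ) θ := by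
    simpa using (Real.hasDerivAt_cos θ).const_sub 1
  have hrpow : HasDerivAt (fun x : ℝ => x ^ a) (a * (1 - Real.cos θ) ^ (a - 1))
      (1 - Real.cos θ) := Real.hasDerivAt_rpow_const (Or.inl hx.ne')
  exact (hrpow.comp θ hcos)

lemma vcM_rec {a : ℝ} (ha : 0 < a) (j : ℤ) :
    ((a : ℂ) + j + 1) * vcM a (j+1) = ((j : ℂ) - a) * vcM a j := by
  set F : ℝ → ℂ := fun θ =>
    ((vcW a θ : ℝ) : ℂ) * (Complex.exp (θ * Complex.I) - 1)
      * Complex.exp (j * θ * Complex.I) with hF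
  set G : ℝ → ℂ := fun θ =>
    ((vcW a θ : ℝ) : ℂ) * (Complex.I * ((a:ℂ)+j+1) * Complex.exp (((j+1 : ℤ)) * θ * Complex.I)
      + Complex.I * ((a:ℂ)-j) * Complex.exp (j * θ * Complex.I)) with hG
  have hπ : (0:ℝ) ≤ 2 * π := by positivity
  have hFcont : ContinuousOn F (Set.Icc 0 (2*π)) := by
    apply Continuous.continuousOn
    refine ((Complex.continuous_ofReal.comp (vcW_cont ha)).mul ?_).mul ?_
    · exact (Complex.continuous_exp.comp (by continuity)).sub continuous_const
    · exact Complex.continuous_exp.comp (by continuity)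
  have hGcont : Continuous G := by
    refine (Complex.continuous_ofReal.comp (vcW_cont ha)).mul ?_
    refine Continuous.add ?_ ?_
    · exact continuous_const.mul (Complex.continuous_exp.comp (by continuity))
    · exact continuous_const.mul (Complex.continuous_exp.comp (by continuity))
  have hderiv : ∀ θ ∈ Set.Ioo (0:ℝ) (2*π), HasDerivWithinAt F (G θ) (Set.Ioi θ) θ := by
    intro θ hθ
    obtain ⟨h0, h2⟩ := hθ
    have hx : (0:ℝ) < 1 - Real.cos θ := one_sub_cos_pos h0 h2
    have hw : HasDerivAt (fun t : ℝ => ((vcW a t : ℝ) : ℂ))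
        ((a * (1 - Real.cos θ) ^ (a - 1) * Real.sin θ : ℝ) : ℂ) θ :=
      (vcW_hasDeriv ha h0 h2).ofReal_comp
    have hz : HasDerivAt (fun t : ℝ => Complex.exp (t * Complex.I) - 1)
        (Complex.I * Complex.exp (θ * Complex.I)) θ := by
      simpa using (exp_theta_I_hasDeriv 1 θ).sub_const 1
    have hj : HasDerivAt (fun t : ℝ => Complex.exp (j * t * Complex.I))
        ((j:ℂ) * Complex.I * Complex.exp (j * θ * Complex.I)) θ :=
      exp_theta_I_hasDeriv (j:ℂ) θ
    have hprod := ((hw.mul hz).mul hj)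
    have hA := sin_mul_exp_sub_one θ
    have hpowC : (((1 - Real.cos θ)^(a-1) : ℝ) : ℂ) * (((1 - Real.cos θ) : ℝ) : ℂ)
        = ((vcW a θ : ℝ) : ℂ) := by
      rw [← Complex.ofReal_mul]
      congr 1
      rw [← Real.rpow_add_one hx.ne' (a-1)]
      norm_num [vcW]
    have hsplit : ((a * (1 - Real.cos θ) ^ (a - 1) * Real.sin θ : ℝ) : ℂ)
        = (a:ℂ) * (((1 - Real.cos θ)^(a-1) : ℝ) : ℂ) * ((Real.sin θ : ℝ) : ℂ) := by
      rw [Complex.ofReal_mul, Complex.ofReal_mul]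
    have hexpadd : Complex.exp (((j+1 : ℤ)) * θ * Complex.I)
        = Complex.exp (j * θ * Complex.I) * Complex.exp (θ * Complex.I) := by
      rw [← Complex.exp_add]; congr 1; push_cast; ring
    have key : (((a * (1 - Real.cos θ) ^ (a - 1) * Real.sin θ : ℝ) : ℂ)
          * (Complex.exp (θ * Complex.I) - 1)
          + ((vcW a θ : ℝ) : ℂ) * (Complex.I * Complex.exp (θ * Complex.I)))
          * Complex.exp (j * θ * Complex.I)
        + ((vcW a θ : ℝ) : ℂ) * (Complex.exp (θ * Complex.I) - 1)
          * ((j:ℂ) * Complex.I * Complex.exp (j * θ * Complex.I)) = G θ := by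
      simp only [hG]
      rw [hexpadd, hsplit]
      linear_combination ((a:ℂ) * (((1 - Real.cos θ)^(a-1) : ℝ):ℂ)
            * Complex.exp ((j:ℂ) * θ * Complex.I)) * hA
        + ((a:ℂ) * Complex.I * (Complex.exp ((θ:ℝ) * Complex.I) + 1)
            * Complex.exp ((j:ℂ) * θ * Complex.I)) * hpowC
    exact (key ▸ hprod).hasDerivWithinAt
  -- FTC
  have hGint : IntervalIntegrable G MeasureTheory.volume 0 (2*π) :=
    hGcont.intervalIntegrable 0 (2*π)
  have hFTC := intervalIntegral.integral_eq_sub_of_hasDeriv_right_of_le hπ hFcont hderiv hGint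
  have hF0 : F 0 = 0 := by
    simp [hF]
  have hF2 : F (2*π) = 0 := by
    have : Complex.exp (((2*π : ℝ) : ℂ) * Complex.I) = 1 := by
      push_cast
      exact Complex.exp_two_pi_mul_I
    simp [hF, this]
  rw [hF2, hF0, sub_zero] at hFTC
  -- split the integral
  have hint1 : IntervalIntegrable
      (fun θ : ℝ => Complex.exp (((j+1:ℤ)) * θ * Complex.I) * ((vcW a θ : ℝ) : ℂ))
      MeasureTheory.volume 0 (2*π) := (vcM_integrand_cont a ha (j+1)).intervalIntegrable 0 (2*π)
  have hint2 : IntervalIntegrable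
      (fun θ : ℝ => Complex.exp (j * θ * Complex.I) * ((vcW a θ : ℝ) : ℂ))
      MeasureTheory.volume 0 (2*π) := (vcM_integrand_cont a ha j).intervalIntegrable 0 (2*π)
  have hsplit2 : (∫ θ in (0:ℝ)..(2*π), G θ)
      = Complex.I * ((a:ℂ)+j+1) * vcM a (j+1) + Complex.I * ((a:ℂ)-j) * vcM a j := by
    have : ∀ θ : ℝ, G θ = Complex.I * ((a:ℂ)+j+1)
          * (Complex.exp (((j+1:ℤ)) * θ * Complex.I) * ((vcW a θ : ℝ) : ℂ))
        + Complex.I * ((a:ℂ)-j) * (Complex.exp (j * θ * Complex.I) * ((vcW a θ : ℝ) : ℂ)) := by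
      intro θ; simp only [hG]; ring
    rw [intervalIntegral.integral_congr (fun θ _ => this θ)]
    rw [intervalIntegral.integral_add (hint1.const_mul _) (hint2.const_mul _),
      intervalIntegral.integral_const_mul, intervalIntegral.integral_const_mul]
    rfl
  rw [hsplit2] at hFTC
  have : ((a:ℂ)+j+1) * vcM a (j+1) + ((a:ℂ)-j) * vcM a j = 0 := by
    linear_combination (-Complex.I) * hFTC
      + (((a:ℂ)+j+1) * vcM a (j+1) + ((a:ℂ)-j) * vcM a j) * Complex.I_sq
  linear_combination this

lemma vcM_zero {a : ℝ} :
    vcM a 0 = ((∫ θ in (0:ℝ)..(2*π), vcW a θ : ℝ) : ℂ) := by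
  unfold vcM
  simp only [Int.cast_zero, zero_mul, Complex.exp_zero, one_mul]
  exact intervalIntegral.integral_ofReal

lemma vcW_integral_pos {a : ℝ} (ha : 0 < a) :
    0 < ∫ θ in (0:ℝ)..(2*π), vcW a θ := by
  have h2π : (0:ℝ) < 2*π := by have := Real.pi_pos; linarith
  exact intervalIntegral.intervalIntegral_pos_of_pos_on
    ((vcW_cont ha).intervalIntegrable 0 (2*π))
    (fun x hx => vcW_pos hx.1 hx.2) h2π

noncomputable def vcT (a : ℝ) (n : ℕ) (k : ℤ) : ℂ :=
  ∑ m ∈ Finset.range n, ((vcL a n m : ℝ) : ℂ) * vcM a (k - m)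

lemma vcT_master {a : ℝ} (ha : 0 < a) {n : ℕ} (hn : 1 ≤ n) (k : ℤ) :
    ((a:ℂ)+k) * vcT a n k + (1-(k:ℂ)) * vcT a n (k-1)
      + (a:ℂ) * vcT a n ((n:ℤ)-k) = 0 := by
  classical
  set g : ℕ → ℂ := fun m => (m:ℂ) * ((vcL a n m : ℝ):ℂ) * vcM a (k-m) with hg
  have key : ∀ m : ℕ, ((a:ℂ)+k-m) * vcM a (k-m) + ((a:ℂ)+m+1-k) * vcM a (k-1-m) = 0 := by
    intro m
    have h := vcM_rec ha (k-1-m)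
    have e : (k-1-(m:ℤ))+1 = k - m := by ring
    rw [e] at h
    push_cast at h ⊢
    linear_combination h
  have hrefl : vcT a n ((n:ℤ)-k)
      = ∑ m ∈ Finset.range n, ((vcL a n (n-1-m) : ℝ) : ℂ) * vcM a (k-1-m) := by
    rw [vcT, ← Finset.sum_range_reflect]
    refine Finset.sum_congr rfl fun m hm => ?_
    have hm' : m < n := Finset.mem_range.mp hm
    have hc : ((n-1-m : ℕ) : ℤ) = (n:ℤ)-1-m := by omega
    congr 1
    rw [show (n:ℤ)-k-((n-1-m : ℕ) : ℤ) = -(k-1-m) by rw [hc]; ring]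
    exact vcM_symm ha (k-1-m)
  have hg0 : g 0 = 0 := by simp [hg]
  have hgn : g n = 0 := by simp [hg, vcL_of_ge hn le_rfl]
  have hshift : ∑ m ∈ Finset.range n, ((m:ℂ)+1) * ((vcL a n (m+1) : ℝ):ℂ) * vcM a (k-1-m)
      = ∑ m ∈ Finset.range n, g m := by
    have e1 := Finset.sum_range_succ' g n
    have e2 := Finset.sum_range_succ g n
    rw [hg0, add_zero] at e1
    rw [hgn, add_zero] at e2
    have h1 : ∑ m ∈ Finset.range n, ((m:ℂ)+1) * ((vcL a n (m+1) : ℝ):ℂ) * vcM a (k-1-m)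
        = ∑ m ∈ Finset.range n, g (m+1) := by
      refine Finset.sum_congr rfl fun m hm => ?_
      simp only [hg]
      push_cast
      rw [show k - ((m:ℤ)+1) = k-1-m by ring]
    rw [h1, ← e1, e2]
  rw [vcT, vcT, hrefl, Finset.mul_sum, Finset.mul_sum, Finset.mul_sum,
    ← Finset.sum_add_distrib, ← Finset.sum_add_distrib]
  have hsummand : ∀ m ∈ Finset.range n,
      ((a:ℂ)+k) * (((vcL a n m : ℝ):ℂ) * vcM a (k-m))
        + (1-(k:ℂ)) * (((vcL a n m : ℝ):ℂ) * vcM a (k-1-m))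
        + (a:ℂ) * (((vcL a n (n-1-m) : ℝ):ℂ) * vcM a (k-1-m))
      = (g m - ((m:ℂ)+1) * ((vcL a n (m+1) : ℝ):ℂ) * vcM a (k-1-m))
        + ((vcL a n m : ℝ):ℂ)
          * (((a:ℂ)+k-m) * vcM a (k-m) + ((a:ℂ)+m+1-k) * vcM a (k-1-m)) := by
    intro m hm
    have hst := vcL_struct ha (Finset.mem_range.mp hm)
    have hstC := congrArg (fun x : ℝ => (x : ℂ)) hst
    push_cast at hstC
    simp only [hg]
    linear_combination (vcM a (k-1-m)) * hstC
  rw [Finset.sum_congr rfl hsummand, Finset.sum_add_distrib, Finset.sum_sub_distrib]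
  have hz2 : ∑ m ∈ Finset.range n, ((vcL a n m : ℝ):ℂ)
      * (((a:ℂ)+k-m) * vcM a (k-m) + ((a:ℂ)+m+1-k) * vcM a (k-1-m)) = 0 := by
    refine Finset.sum_eq_zero fun m hm => ?_
    rw [key m, mul_zero]
  rw [hz2, hshift]
  ring

lemma vcT_rec {a : ℝ} (ha : 0 < a) {n : ℕ} (hn : 1 ≤ n) (k : ℤ) :
    vcT a (n+1) k = ((a:ℂ)+n) * vcT a n k + (a:ℂ) * vcT a n ((n:ℤ)-k) := by
  have hsplit : vcT a (n+1) k
      = ∑ m ∈ Finset.range (n+1), (((a+n) * vcL a n m + a * vcL a n (n-m) : ℝ):ℂ)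
          * vcM a (k-m) := by
    rw [vcT]
    refine Finset.sum_congr rfl fun m hm => ?_
    have hm' : m ≤ n := by have := Finset.mem_range.mp hm; omega
    rw [vcL_rec hn hm']
  rw [hsplit]
  have hexp : ∀ m ∈ Finset.range (n+1),
      (((a+n) * vcL a n m + a * vcL a n (n-m) : ℝ):ℂ) * vcM a (k-m)
      = ((a:ℂ)+n) * (((vcL a n m : ℝ):ℂ) * vcM a (k-m))
        + (a:ℂ) * (((vcL a n (n-m) : ℝ):ℂ) * vcM a (k-m)) := by
    intro m hm
    push_cast
    ring
  rw [Finset.sum_congr rfl hexp, Finset.sum_add_distrib]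
  congr 1
  · rw [← Finset.mul_sum, Finset.sum_range_succ, vcL_of_ge hn le_rfl]
    simp [vcT]
  · rw [← Finset.mul_sum]
    congr 1
    rw [← Finset.sum_range_reflect]
    have : ∀ m ∈ Finset.range (n+1),
        ((vcL a n (n - (n+1-1-m)) : ℝ):ℂ) * vcM a (k - ((n+1-1-m : ℕ):ℤ))
        = ((vcL a n m : ℝ):ℂ) * vcM a ((n:ℤ) - k - m) := by
      intro m hm
      have hm' : m ≤ n := by have := Finset.mem_range.mp hm; omega
      have e1 : n - (n+1-1-m) = m := by omega
      have e2 : ((n+1-1-m : ℕ) : ℤ) = (n:ℤ) - m := by omega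
      rw [e1, e2, show k - ((n:ℤ) - m) = -((n:ℤ) - k - m) by ring, vcM_symm ha]
    rw [Finset.sum_congr rfl this, vcT, Finset.sum_range_succ, vcL_of_ge hn le_rfl]
    simp

lemma vcT_middle {a : ℝ} (ha : 0 < a) :
    ∀ n : ℕ, 1 ≤ n → ∀ k : ℤ, 1 ≤ k → k ≤ (n:ℤ) - 1 → vcT a n k = 0 := by
  intro n
  induction n with
  | zero => omega
  | succ n ih =>
    intro _ k hk1 hk2
    rcases Nat.eq_zero_or_pos n with rfl | hn
    · omega
    have hrec := vcT_rec ha hn k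
    rcases lt_or_eq_of_le hk2 with hlt | heq
    · have h1 : vcT a n k = 0 := ih hn k hk1 (by push_cast at hlt ⊢; omega)
      have h2 : vcT a n ((n:ℤ) - k) = 0 := by
        refine ih hn _ (by push_cast at hlt ⊢; omega) (by omega)
      rw [hrec, h1, h2]; ring
    · -- k = n
      have hkn : k = (n:ℤ) := by omega
      have hmaster := vcT_master ha hn (n:ℤ)
      have hmid : (1 - ((n:ℤ):ℂ)) * vcT a n ((n:ℤ)-1) = 0 := by
        rcases Nat.eq_or_lt_of_le hn with h1 | h1
        · rw [← h1]; push_cast; ring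
        · rw [ih hn ((n:ℤ)-1) (by omega) (by omega)]; ring
      rw [sub_self] at hmaster
      rw [hrec, hkn]
      have : ((a:ℂ)+n) * vcT a n n + (a:ℂ) * vcT a n 0 = 0 := by
        have := hmaster
        rw [show ((n:ℤ):ℂ) = ((n:ℕ):ℂ) by push_cast; rfl] at this
        linear_combination this - hmid
      rw [sub_self]
      linear_combination this

lemma vcT_last {a : ℝ} (ha : 0 < a) {n : ℕ} (hn : 1 ≤ n) :
    ((a:ℂ)+n) * vcT a n n + (a:ℂ) * vcT a n 0 = 0 := by
  have hmaster := vcT_master ha hn (n:ℤ)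
  rw [sub_self] at hmaster
  have hmid : (1 - ((n:ℤ):ℂ)) * vcT a n ((n:ℤ)-1) = 0 := by
    rcases Nat.eq_or_lt_of_le hn with h1 | h1
    · rw [← h1]; push_cast; ring
    · rw [vcT_middle ha n hn ((n:ℤ)-1) (by omega) (by omega)]; ring
  rw [show ((n:ℤ):ℂ) = ((n:ℕ):ℂ) by push_cast; rfl] at hmaster
  linear_combination hmaster - hmid

lemma vcT_zero_ne {a : ℝ} (ha : 0 < a) : ∀ n : ℕ, 1 ≤ n → vcT a n 0 ≠ 0 := by
  intro n
  induction n with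
  | zero => omega
  | succ n ih =>
    intro _
    rcases Nat.eq_zero_or_pos n with rfl | hn
    · have h1 : vcT a 1 0 = ((vcP a 1 : ℝ):ℂ) * vcM a 0 := by
        rw [vcT, Finset.sum_range_one, vcL_zero]
        norm_num
      rw [h1, vcM_zero]
      intro h
      rcases mul_eq_zero.mp h with h1 | h1
      · have := vcP_pos ha 1
        simp only [Complex.ofReal_eq_zero] at h1
        linarith
      · have := vcW_integral_pos ha
        rw [Complex.ofReal_eq_zero] at h1
        linarith
    · have hrec := vcT_rec ha hn 0
      rw [sub_zero] at hrec
      have hlast := vcT_last ha hn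
      have hT0 := ih hn
      have hna : ((a:ℂ)+n) ≠ 0 := by
        intro h
        have : (a + (n:ℝ) : ℝ) = 0 := by exact_mod_cast h
        have : (0:ℝ) < a + n := by positivity
        linarith
      intro hG
      -- (a+n) * vcT a (n+1) 0 = ((a+n)^2 - a^2) * vcT a n 0
      have hkey : ((a:ℂ)+n) * vcT a (n+1) 0 = (((a:ℂ)+n)^2 - (a:ℂ)^2) * vcT a n 0 := by
        rw [hrec]
        linear_combination (a:ℂ) * hlast
      rw [hG, mul_zero] at hkey
      have hcoef : (((a:ℂ)+n)^2 - (a:ℂ)^2) ≠ 0 := by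
        intro h
        have : ((a + (n:ℝ))^2 - a^2 : ℝ) = 0 := by exact_mod_cast h
        have hn' : (1:ℝ) ≤ (n:ℝ) := by exact_mod_cast hn
        have h1 : (0:ℝ) < (a+n)^2 - a^2 := by nlinarith
        linarith
      exact hT0 (by
        rcases mul_eq_zero.mp hkey.symm with h | h
        · exact absurd h hcoef
        · exact h)

open Real intervalIntegral in
/-- For `β > 0` and `μ` the probability measure on the circle with
`dμ = (1/Z)(1 - cos θ)^(1/β) dθ/(2π)`, the monic orthogonal polynomials satisfy
`p_n(0) = 1/(1 + n β)`, i.e. the Verblunsky coefficients are `α_n = 1/(1+nβ)`. -/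
theorem verblunsky_coefficients_of_one_minus_cos_pow
    (β : ℝ) (hβ : 0 < β)
    (Z : ℝ) (hZ : Z = ∫ θ in (0:ℝ)..(2*π), (1 - Real.cos θ) ^ (1/β) / (2*π))
    (n : ℕ) (hn : 1 ≤ n)
    (p : Polynomial ℂ) (hmonic : p.Monic) (hdeg : p.natDegree = n)
    (horth : ∀ k : ℕ, k < n →
      (∫ θ in (0:ℝ)..(2*π),
        p.eval (Complex.exp (θ * Complex.I)) * Complex.exp (-(k : ℂ) * θ * Complex.I)
          * (((1 - Real.cos θ) ^ (1/β) / (Z * (2*π)) : ℝ) : ℂ)) = 0) :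
    p.eval 0 = 1 / (1 + n * β) := by
  set a : ℝ := 1/β with ha_def
  have ha : 0 < a := by positivity
  have hπ : (0:ℝ) < π := Real.pi_pos
  -- Z > 0
  have hZpos : 0 < Z := by
    rw [hZ]
    have : (∫ θ in (0:ℝ)..(2*π), (1 - Real.cos θ) ^ (1/β) / (2*π))
        = (∫ θ in (0:ℝ)..(2*π), vcW a θ) / (2*π) := by
      rw [← intervalIntegral.integral_div]
      simp only [vcW, ha_def]
    rw [this]
    have := vcW_integral_pos ha
    positivity
  set c : ℂ := ((Z * (2*π) : ℝ) : ℂ) with hc_def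
  have hc0 : c ≠ 0 := by
    simp only [hc_def, Complex.ofReal_ne_zero]
    positivity
  -- orthogonality in terms of moments
  have hL : ∀ k : ℕ, k < n →
      ∑ m ∈ Finset.range (n+1), p.coeff m * vcM a ((m:ℤ) - k) = 0 := by
    intro k hk
    have hint := horth k hk
    have hpt : ∀ θ ∈ Set.uIcc (0:ℝ) (2*π),
        p.eval (Complex.exp (θ * Complex.I)) * Complex.exp (-(k : ℂ) * θ * Complex.I)
          * (((1 - Real.cos θ) ^ (1/β) / (Z * (2*π)) : ℝ) : ℂ)
        = ∑ m ∈ Finset.range (n+1), (p.coeff m * c⁻¹)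
            * (Complex.exp ((((m:ℤ) - k : ℤ)) * θ * Complex.I) * ((vcW a θ : ℝ):ℂ)) := by
      intro θ _
      rw [Polynomial.eval_eq_sum_range, hdeg, Finset.sum_mul, Finset.sum_mul]
      refine Finset.sum_congr rfl fun m hm => ?_
      rw [← Complex.exp_nat_mul]
      have hexp : Complex.exp ((m:ℂ) * (θ * Complex.I)) * Complex.exp (-(k : ℂ) * θ * Complex.I)
          = Complex.exp ((((m:ℤ) - k : ℤ)) * θ * Complex.I) := by
        rw [← Complex.exp_add]
        congr 1
        push_cast
        ring
      have hcast : (((1 - Real.cos θ) ^ (1/β) / (Z * (2*π)) : ℝ) : ℂ)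
          = ((vcW a θ : ℝ):ℂ) * c⁻¹ := by
        rw [hc_def, Complex.ofReal_div]
        rw [div_eq_mul_inv]
        simp only [vcW, ha_def]
      calc p.coeff m * Complex.exp ((m:ℂ) * (θ * Complex.I))
            * Complex.exp (-(k : ℂ) * θ * Complex.I)
            * (((1 - Real.cos θ) ^ (1/β) / (Z * (2*π)) : ℝ) : ℂ)
          = p.coeff m * (Complex.exp ((m:ℂ) * (θ * Complex.I))
              * Complex.exp (-(k : ℂ) * θ * Complex.I))
              * (((1 - Real.cos θ) ^ (1/β) / (Z * (2*π)) : ℝ) : ℂ) := by ring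
        _ = p.coeff m * Complex.exp ((((m:ℤ) - k : ℤ)) * θ * Complex.I)
              * (((vcW a θ : ℝ):ℂ) * c⁻¹) := by rw [hexp, hcast]
        _ = (p.coeff m * c⁻¹)
              * (Complex.exp ((((m:ℤ) - k : ℤ)) * θ * Complex.I) * ((vcW a θ : ℝ):ℂ)) := by
            ring
    rw [intervalIntegral.integral_congr hpt] at hint
    rw [intervalIntegral.integral_finset_sum (fun (m : ℕ) _ =>
      (((vcM_integrand_cont a ha ((m:ℤ)-k)).intervalIntegrable 0 (2*π)).const_mul (p.coeff m * c⁻¹)))] at hint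
    have hint2 : ∑ m ∈ Finset.range (n+1), (p.coeff m * c⁻¹) * vcM a ((m:ℤ) - k) = 0 := by
      rw [← hint]
      refine Finset.sum_congr rfl fun m hm => ?_
      rw [intervalIntegral.integral_const_mul]
      try rfl
    have := congrArg (fun x => c * x) hint2
    simp only [mul_zero, Finset.mul_sum] at this
    rw [← this]
    refine Finset.sum_congr rfl fun m hm => ?_
    field_simp
  -- pair with the λ vector
  have hS : ∑ m ∈ Finset.range (n+1), p.coeff m * vcT a n (m:ℤ) = 0 := by
    have hswap : ∑ m ∈ Finset.range (n+1), p.coeff m * vcT a n (m:ℤ)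
        = ∑ k ∈ Finset.range n, ((vcL a n k : ℝ):ℂ)
            * (∑ m ∈ Finset.range (n+1), p.coeff m * vcM a ((m:ℤ) - k)) := by
      simp only [vcT, Finset.mul_sum]
      rw [Finset.sum_comm]
      refine Finset.sum_congr rfl fun m _ => ?_
      refine Finset.sum_congr rfl fun k _ => ?_
      ring
    rw [hswap]
    refine Finset.sum_eq_zero fun k hk => ?_
    rw [hL k (Finset.mem_range.mp hk), mul_zero]
  -- split the sum
  have hcoeffn : p.coeff n = 1 := by
    rw [← hdeg]; exact hmonic.coeff_natDegree
  rw [Finset.sum_range_succ, hcoeffn, one_mul] at hS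
  have hmid : ∑ m ∈ Finset.range n, p.coeff m * vcT a n (m:ℤ) = p.coeff 0 * vcT a n 0 := by
    refine Finset.sum_eq_single_of_mem 0 (Finset.mem_range.mpr (by omega)) fun m hm hm0 => ?_
    rw [vcT_middle ha n hn (m:ℤ) (by omega) (by
      have := Finset.mem_range.mp hm; omega), mul_zero]
  rw [hmid] at hS
  -- hS : p.coeff 0 * vcT a n 0 + vcT a n n = 0
  have hlast := vcT_last ha hn
  have hT0 := vcT_zero_ne ha n hn
  have hfinal : (((a:ℝ):ℂ) + n) * p.coeff 0 = ((a:ℝ):ℂ) := by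
    have hkey : ((((a:ℝ):ℂ) + n) * p.coeff 0 - ((a:ℝ):ℂ)) * vcT a n 0 = 0 := by
      linear_combination (((a:ℝ):ℂ)+(n:ℂ)) * hS - hlast
    rcases mul_eq_zero.mp hkey with h | h
    · exact sub_eq_zero.mp h
    · exact absurd h hT0
  -- convert to final form
  have hβC : ((β:ℝ):ℂ) ≠ 0 := Complex.ofReal_ne_zero.mpr hβ.ne'
  have h1 : ((1:ℂ) + n * β) * p.coeff 0 = 1 := by
    have e1 : ((β:ℝ):ℂ) * (((a:ℝ):ℂ) + n) = 1 + n * β := by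
      rw [ha_def]
      push_cast
      field_simp
    have e2 : ((β:ℝ):ℂ) * ((a:ℝ):ℂ) = 1 := by
      rw [ha_def]
      push_cast
      field_simp
    calc ((1:ℂ) + n * β) * p.coeff 0 = ((β:ℝ):ℂ) * ((((a:ℝ):ℂ) + n) * p.coeff 0) := by
          rw [← e1]; push_cast; ring
      _ = ((β:ℝ):ℂ) * ((a:ℝ):ℂ) := by rw [hfinal]
      _ = 1 := e2
  have h1nβ : ((1:ℂ) + n * β) ≠ 0 := by
    have : (0:ℝ) < 1 + n * β := by positivity
    intro h
    have : ((1 + n*β : ℝ):ℂ) = 0 := by push_cast; push_cast at h; exact_mod_cast h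
    rw [Complex.ofReal_eq_zero] at this
    linarith
  rw [← Polynomial.coeff_zero_eq_eval_zero]
  field_simp
  linear_combination h1
end

section
/- Let β > 0 and m = 1/β. Then the infinite product ∏_{n=1}^∞ ( 1 − 1/(1 + nβ)² ) converges and equals √π · 2^{−2m} · Γ(m+1)/Γ(m + 1/2). -/
open Real Filter Finset Topology

private lemma aux_term (β m : ℝ) (hβ : 0 < β) (hm : m = 1/β) (n : ℕ) :
    1 - 1 / (1 + ((n:ℝ) + 1) * β) ^ 2
      = (((n:ℝ)+1) * (((n:ℝ)+1) + 2*m)) / ((m + ((n:ℝ)+1))^2) := by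
  subst hm
  have hb : β ≠ 0 := hβ.ne'
  have h1 : (1:ℝ) + ((n:ℝ)+1)*β ≠ 0 := by positivity
  have h2 : 1/β + ((n:ℝ)+1) ≠ 0 := by positivity
  field_simp
  ring

private lemma aux_prod_formula (m : ℝ) (hm0 : 0 < m) (N : ℕ) :
    ∏ i ∈ Finset.range N, ((((i:ℝ)+1) * (((i:ℝ)+1) + 2*m)) / ((m + ((i:ℝ)+1))^2))
      = (Nat.factorial N : ℝ) * (∏ j ∈ Finset.range (N+1), (2*m + (j:ℝ))) * m^2
        / (2*m * (∏ j ∈ Finset.range (N+1), (m + (j:ℝ)))^2) := by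
  induction N with
  | zero => simp; field_simp
  | succ N ih =>
    have hA : 0 < ∏ j ∈ Finset.range (N+1), (m + (j:ℝ)) :=
      Finset.prod_pos (fun j _ => by positivity)
    have hB : 0 < ∏ j ∈ Finset.range (N+1), (2*m + (j:ℝ)) :=
      Finset.prod_pos (fun j _ => by positivity)
    have h1 : (0:ℝ) < m + ((N:ℝ)+1) := by positivity
    have h2 : (0:ℝ) < 2*m + ((N:ℝ)+1) := by positivity
    rw [Finset.prod_range_succ, Finset.prod_range_succ (fun j => (2*m + (j:ℝ))),
      Finset.prod_range_succ (fun j => (m + (j:ℝ))), ih]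
    have hF : (0:ℝ) < Nat.factorial N := by exact_mod_cast N.factorial_pos
    push_cast [Nat.factorial_succ]
    field_simp
    ring

private lemma aux_gammaSeq (m : ℝ) (hm0 : 0 < m) {N : ℕ} (hN : 1 ≤ N) :
    (Nat.factorial N : ℝ) * (∏ j ∈ Finset.range (N+1), (2*m + (j:ℝ))) * m^2
        / (2*m * (∏ j ∈ Finset.range (N+1), (m + (j:ℝ)))^2)
      = m * (Real.GammaSeq m N)^2 / (2 * Real.GammaSeq (2*m) N) := by
  have hc : (0:ℝ) < N := by exact_mod_cast hN
  have hF : (0:ℝ) < Nat.factorial N := by exact_mod_cast N.factorial_pos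
  have hA : 0 < ∏ j ∈ Finset.range (N+1), (m + (j:ℝ)) :=
    Finset.prod_pos (fun j _ => by positivity)
  have hB : 0 < ∏ j ∈ Finset.range (N+1), (2*m + (j:ℝ)) :=
    Finset.prod_pos (fun j _ => by positivity)
  have hcm : 0 < (N:ℝ)^m := Real.rpow_pos_of_pos hc m
  have hrp : (N:ℝ) ^ (2*m) = (N:ℝ)^m * (N:ℝ)^m := by
    rw [← Real.rpow_add hc]; ring_nf
  rw [Real.GammaSeq, Real.GammaSeq, hrp]
  field_simp



open Real in
/-- For `β > 0` and `m = 1/β`, the infinite product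
`∏_{n=1}^∞ (1 - 1/(1+nβ)²)` converges and equals `√π · 2^{-2m} · Γ(m+1)/Γ(m+1/2)`. -/
theorem tprod_one_sub_verblunsky_sq (β m : ℝ) (hβ : 0 < β) (hm : m = 1/β) :
    Multipliable (fun n : ℕ => 1 - 1 / (1 + ((n:ℝ) + 1) * β) ^ 2) ∧
    ∏' n : ℕ, (1 - 1 / (1 + ((n:ℝ) + 1) * β) ^ 2)
      = Real.sqrt π * 2 ^ (-2 * m) * Real.Gamma (m + 1) / Real.Gamma (m + 1/2) := by
  have hm0 : 0 < m := by rw [hm]; positivity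
  set f : ℕ → ℝ := fun n => 1 - 1 / (1 + ((n:ℝ) + 1) * β) ^ 2 with hfdef
  have hfe : ∀ n, f n = (((n:ℝ)+1) * (((n:ℝ)+1) + 2*m)) / ((m + ((n:ℝ)+1))^2) :=
    fun n => aux_term β m hβ hm n
  have hfpos : ∀ n, 0 < f n := fun n => by rw [hfe n]; positivity
  -- bound on the logs
  have hbound : ∀ n : ℕ, ‖Real.log (f n)‖ ≤ m^2 * (1/((n:ℝ)+1)^2) := by
    intro n
    have hn1 : (0:ℝ) < (n:ℝ)+1 := by positivity
    have hfl1 : f n ≤ 1 := by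
      have h0 : 0 < 1 + ((n:ℝ)+1) * β := by positivity
      have : 0 < 1/(1+((n:ℝ)+1)*β)^2 := by positivity
      simp only [hfdef]; linarith
    have hlognp : Real.log (f n) ≤ 0 := Real.log_nonpos (hfpos n).le hfl1
    have hinv : -Real.log (f n) = Real.log (1 / f n) := by
      rw [one_div, Real.log_inv]
    have hle : Real.log (1 / f n) ≤ 1 / f n - 1 :=
      Real.log_le_sub_one_of_pos (by rw [one_div]; exact inv_pos.mpr (hfpos n))
    have heq : 1 / f n - 1 = m^2 / (((n:ℝ)+1) * (((n:ℝ)+1) + 2*m)) := by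
      rw [hfe n]
      have h1 : (0:ℝ) < ((n:ℝ)+1) * (((n:ℝ)+1) + 2*m) := by positivity
      have h2 : (0:ℝ) < m + ((n:ℝ)+1) := by positivity
      field_simp
      ring
    have hle2 : m^2 / (((n:ℝ)+1) * (((n:ℝ)+1) + 2*m)) ≤ m^2 * (1/((n:ℝ)+1)^2) := by
      rw [mul_one_div]
      apply div_le_div_of_nonneg_left (by positivity) (by positivity)
      nlinarith
    rw [Real.norm_eq_abs, abs_of_nonpos hlognp]
    calc -Real.log (f n) = Real.log (1/f n) := hinv
      _ ≤ 1 / f n - 1 := hle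
      _ = _ := heq
      _ ≤ _ := hle2
  have hsum2 : Summable (fun n : ℕ => m^2 * (1/((n:ℝ)+1)^2)) := by
    apply Summable.mul_left
    have hbase : Summable (fun n : ℕ => 1/(n:ℝ)^2) :=
      Real.summable_one_div_nat_pow.mpr one_lt_two
    have := (summable_nat_add_iff 1).mpr hbase
    apply this.congr
    intro n
    push_cast
    ring
  have hlogsum : Summable (fun n => Real.log (f n)) :=
    Summable.of_norm_bounded hsum2 hbound
  have hM : Multipliable f :=
    Real.multipliable_of_summable_log hfpos hlogsum
  refine ⟨hM, ?_⟩
  -- the limit of partial products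
  have hΓ2m : 0 < Real.Gamma (2*m) := Real.Gamma_pos_of_pos (by positivity)
  have h1 : Tendsto (fun N => ∏ i ∈ Finset.range N, f i) atTop (𝓝 (∏' n, f n)) :=
    hM.hasProd.tendsto_prod_nat
  have h2 : Tendsto (fun N => ∏ i ∈ Finset.range N, f i) atTop
      (𝓝 (m * (Real.Gamma m)^2 / (2 * Real.Gamma (2*m)))) := by
    have hG : Tendsto (fun N => m * (Real.GammaSeq m N)^2 / (2 * Real.GammaSeq (2*m) N))
        atTop (𝓝 (m * (Real.Gamma m)^2 / (2 * Real.Gamma (2*m)))) := by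
      apply Tendsto.div
      · exact tendsto_const_nhds.mul ((Real.GammaSeq_tendsto_Gamma m).pow 2)
      · exact tendsto_const_nhds.mul (Real.GammaSeq_tendsto_Gamma (2*m))
      · positivity
    apply hG.congr'
    filter_upwards [eventually_ge_atTop 1] with N hN
    rw [Finset.prod_congr rfl (fun i _ => hfe i), aux_prod_formula m hm0 N,
      aux_gammaSeq m hm0 hN]
  have hval : (∏' n, f n) = m * (Real.Gamma m)^2 / (2 * Real.Gamma (2*m)) :=
    tendsto_nhds_unique h1 h2
  rw [hval]
  -- final algebra with the duplication formula
  have hΓm : 0 < Real.Gamma m := Real.Gamma_pos_of_pos hm0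
  have hΓh : 0 < Real.Gamma (m + 1/2) := Real.Gamma_pos_of_pos (by linarith)
  have hdup := Real.Gamma_mul_Gamma_add_half m
  have hpow : (2:ℝ) ^ ((1:ℝ) - 2*m) = 2 * 2 ^ (-(2*m)) := by
    rw [show ((1:ℝ) - 2*m) = 1 + (-(2*m)) by ring, Real.rpow_add two_pos, Real.rpow_one]
  have hpos2 : (0:ℝ) < (2:ℝ) ^ (-(2*m)) := Real.rpow_pos_of_pos two_pos _
  have hπ : 0 < Real.sqrt π := Real.sqrt_pos.mpr Real.pi_pos
  rw [Real.Gamma_add_one hm0.ne', show ((-2:ℝ) * m) = -(2*m) by ring]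
  rw [hpow] at hdup
  -- hdup : Γ m * Γ (m + 1/2) = Γ (2*m) * (2 * 2^(-(2m))) * √π
  have key : Real.Gamma (2*m) = Real.Gamma m * Real.Gamma (m+1/2) / (2 * (2:ℝ)^(-(2*m)) * Real.sqrt π) := by
    rw [eq_div_iff (by positivity)]
    linear_combination -hdup
  rw [key]
  field_simp
end

section
/- Let m ≥ 1 be an integer and let μ be the probability measure on the unit circle given by dμ = (1/Z)(1 − cos θ)^m dθ/(2π) with Z = ∫₀^{2π} (1 − cos θ)^m dθ/(2π). Then for every complex z with |z| < 1, the Carathéodory function F(z) = ∫₀^{2π} (e^{iθ} + z)/(e^{iθ} − z) dμ(θ) is the polynomial F(z) = 1 + 2 (m!)²/(2m−1)!! · Σ_{n=1}^{m} Σ_{k=0}^{⌊(m−n)/2⌋} (−1/2)^{n+2k} / ( (m−n−2k)! · k! · (n+k)! ) · z^n, where (2m−1)!! = 1·3·5⋯(2m−1). -/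
open Real intervalIntegral in
lemma intA (c : ℤ) : (∫ θ in (0:ℝ)..(2*π), Complex.exp (c * θ * Complex.I))
    = if c = 0 then (2*π : ℂ) else 0 := by
  split_ifs with h
  · norm_num [h, Complex.ofReal_mul]
  · have hc : (c : ℂ) * Complex.I ≠ 0 := by
      simp [Complex.ext_iff, h]
    have key := integral_exp_mul_complex (a := 0) (b := 2*π) hc
    have heq : ∀ θ : ℝ, Complex.exp ((c:ℂ) * θ * Complex.I) = Complex.exp ((c:ℂ) * Complex.I * θ) := by
      intro θ; ring_nf
    have h1 : Complex.exp ((c:ℂ) * Complex.I * ((2*π : ℝ):ℂ)) = 1 := by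
      rw [show (c:ℂ) * Complex.I * ((2*π:ℝ):ℂ) = c * (2 * π * Complex.I) by push_cast; ring]
      exact Complex.exp_int_mul_two_pi_mul_I c
    simp_rw [heq]
    rw [key, h1]
    simp

open Real in
lemma cos_fact (θ : ℝ) : ((1 - Real.cos θ : ℝ) : ℂ)
    = -(1/2) * Complex.exp (-(θ * Complex.I)) * (Complex.exp (θ * Complex.I) - 1)^2 := by
  have h2 : Complex.exp (θ * Complex.I) * Complex.exp (-(θ * Complex.I)) = 1 := by
    rw [← Complex.exp_add]; simp
  have hcos : ((Real.cos θ : ℝ) : ℂ) = (Complex.exp (θ * Complex.I) + Complex.exp (-(θ * Complex.I))) / 2 := by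
    rw [Complex.ofReal_cos, Complex.cos]
    ring_nf
  rw [Complex.ofReal_sub, Complex.ofReal_one, hcos]
  linear_combination (Complex.exp (θ * Complex.I)/2 - 1) * h2

open Real in
lemma intJ_A (m n : ℕ) :
    (∫ θ in (0:ℝ)..(2*π), Complex.exp (-(n:ℂ) * θ * Complex.I) * ((1 - Real.cos θ : ℝ):ℂ)^m)
    = 2*π * ((-1:ℂ)^n * ((2*m).choose (m+n)) / 2^m) := by
  have h : ∀ θ:ℝ, Complex.exp (-(n:ℂ) * θ * Complex.I) * ((1 - Real.cos θ : ℝ):ℂ)^m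
      = ∑ l ∈ Finset.range (2*m+1), (-1/2:ℂ)^m * (-1)^(2*m-l) * ((2*m).choose l)
          * Complex.exp ((((l:ℤ) - ((m:ℤ)+(n:ℤ)) : ℤ) : ℂ) * θ * Complex.I) := by
    intro θ
    rw [cos_fact, mul_pow, mul_pow, ← pow_mul, sub_eq_add_neg, add_pow, Finset.mul_sum, Finset.mul_sum]
    apply Finset.sum_congr rfl
    intro l hl
    have hE : Complex.exp (-(n:ℂ)*θ*Complex.I) * (Complex.exp (-(θ*Complex.I)))^m
        * (Complex.exp (θ*Complex.I))^l
        = Complex.exp ((((l:ℤ) - ((m:ℤ)+(n:ℤ)) : ℤ) : ℂ) * θ * Complex.I) := by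
      rw [← Complex.exp_nat_mul, ← Complex.exp_nat_mul, ← Complex.exp_add, ← Complex.exp_add]
      congr 1; push_cast; ring
    have hhalf : (-(1/2):ℂ)^m = (-1/2:ℂ)^m := by norm_num
    linear_combination ((-1/2:ℂ)^m * (-1:ℂ)^(2*m-l) * (((2*m).choose l):ℂ)) * hE
  simp_rw [h]
  rw [intervalIntegral.integral_finset_sum]
  · have hterm : ∀ l ∈ Finset.range (2*m+1),
        (∫ θ in (0:ℝ)..(2*π), (-1/2:ℂ)^m * (-1)^(2*m-l) * ((2*m).choose l)
          * Complex.exp ((((l:ℤ) - ((m:ℤ)+(n:ℤ)) : ℤ) : ℂ) * θ * Complex.I))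
        = if l = m + n then (-1/2:ℂ)^m * (-1)^(2*m-l) * ((2*m).choose l) * (2*π) else 0 := by
      intro l hl
      rw [intervalIntegral.integral_const_mul, intA ((l:ℤ) - ((m:ℤ)+(n:ℤ)))]
      have hiff : ((l:ℤ) - ((m:ℤ)+n) = 0) ↔ l = m + n := by omega
      simp only [hiff]
      split_ifs <;> simp
    rw [Finset.sum_congr rfl hterm, Finset.sum_ite_eq' (Finset.range (2*m+1)) (m+n)]
    split_ifs with hmem
    · have hn : n ≤ m := by have := Finset.mem_range.mp hmem; omega
      rw [show 2*m - (m+n) = m - n from by omega]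
      have h1 : (-1/2:ℂ)^m * (-1:ℂ)^(m-n) = (-1:ℂ)^n / 2^m := by
        rw [div_pow, div_mul_eq_mul_div, ← pow_add,
          show m + (m-n) = n + 2*(m-n) from by omega, pow_add, pow_mul]
        norm_num
      linear_combination (2*(π:ℂ)*(((2*m).choose (m+n)):ℂ)) * h1
    · have hn : 2*m < m + n := by
        simp only [Finset.mem_range] at hmem; omega
      rw [Nat.choose_eq_zero_of_lt hn]
      simp
  · intro l hl
    apply Continuous.intervalIntegrable
    fun_prop

open Real in
lemma intJ_B (m n : ℕ) (hnm : n ≤ m) :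
    (∫ θ in (0:ℝ)..(2*π), Complex.exp (-(n:ℂ) * θ * Complex.I) * ((1 - Real.cos θ : ℝ):ℂ)^m)
    = 2*π * (m.factorial : ℂ) * ∑ k ∈ Finset.range ((m - n)/2 + 1),
        (-1/2:ℂ)^(n+2*k) / (((m-n-2*k).factorial : ℂ) * (k.factorial : ℂ) * ((n+k).factorial : ℂ)) := by
  have h : ∀ θ:ℝ, Complex.exp (-(n:ℂ) * θ * Complex.I) * ((1 - Real.cos θ : ℝ):ℂ)^m
      = ∑ j ∈ Finset.range (m+1), ∑ i ∈ Finset.range (j+1),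
          (m.choose j : ℂ) * (j.choose i) * (-1/2:ℂ)^j
            * Complex.exp (((2*(i:ℤ) - (j:ℤ) - (n:ℤ) : ℤ):ℂ) * θ * Complex.I) := by
    intro θ
    set A := Complex.exp (θ*Complex.I) with hA
    set B := Complex.exp (-(θ*Complex.I)) with hB
    have hcos : ((1 - Real.cos θ:ℝ):ℂ) = -(A + B)/2 + 1 := by
      rw [Complex.ofReal_sub, Complex.ofReal_one, Complex.ofReal_cos, Complex.cos, hA, hB]
      ring
    have key : ((1 - Real.cos θ:ℝ):ℂ)^m = ∑ j ∈ Finset.range (m+1), ∑ i ∈ Finset.range (j+1),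
        (m.choose j : ℂ) * (j.choose i) * (-1/2:ℂ)^j * A^i * B^(j-i) := by
      rw [hcos, add_pow]
      apply Finset.sum_congr rfl
      intro j hj
      have expand : (-(A+B)/2:ℂ)^j
          = ∑ i ∈ Finset.range (j+1), (-1/2:ℂ)^j * A^i * B^(j-i) * (j.choose i) := by
        rw [show (-(A+B)/2:ℂ) = (-1/2) * (A+B) by ring, mul_pow, add_pow, Finset.mul_sum]
        exact Finset.sum_congr rfl fun i _ => by ring
      rw [expand, one_pow, mul_one, Finset.sum_mul]
      exact Finset.sum_congr rfl fun i _ => by ring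
    rw [key, Finset.mul_sum]
    refine Finset.sum_congr rfl fun j hj => ?_
    rw [Finset.mul_sum]
    refine Finset.sum_congr rfl fun i hi => ?_
    have hij : i ≤ j := by
      simpa [Nat.lt_succ_iff] using Finset.mem_range.mp hi
    have hE : Complex.exp (-(n:ℂ)*θ*Complex.I) * (A^i * B^(j-i))
        = Complex.exp (((2*(i:ℤ) - (j:ℤ) - (n:ℤ) : ℤ):ℂ) * θ * Complex.I) := by
      rw [hA, hB, ← Complex.exp_nat_mul, ← Complex.exp_nat_mul, ← Complex.exp_add,
        ← Complex.exp_add]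
      congr 1
      push_cast [Nat.cast_sub hij]
      ring
    linear_combination ((m.choose j : ℂ) * (j.choose i) * (-1/2:ℂ)^j) * hE
  simp_rw [h]
  have hInt : (∫ θ in (0:ℝ)..(2*π), ∑ j ∈ Finset.range (m+1), ∑ i ∈ Finset.range (j+1),
        (m.choose j : ℂ) * (j.choose i) * (-1/2:ℂ)^j
          * Complex.exp (((2*(i:ℤ) - (j:ℤ) - (n:ℤ) : ℤ):ℂ) * θ * Complex.I))
      = ∑ j ∈ Finset.range (m+1), ∑ i ∈ Finset.range (j+1),
          ∫ θ in (0:ℝ)..(2*π), (m.choose j : ℂ) * (j.choose i) * (-1/2:ℂ)^j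
            * Complex.exp (((2*(i:ℤ) - (j:ℤ) - (n:ℤ) : ℤ):ℂ) * θ * Complex.I) := by
    rw [intervalIntegral.integral_finset_sum]
    · exact Finset.sum_congr rfl fun j _ => by
        rw [intervalIntegral.integral_finset_sum]
        intro i _
        apply Continuous.intervalIntegrable
        fun_prop
    · intro j _
      apply Continuous.intervalIntegrable
      apply continuous_finset_sum
      intro i _
      fun_prop
  rw [hInt]
  have hval : ∀ j i : ℕ, (∫ θ in (0:ℝ)..(2*π), (m.choose j : ℂ) * (j.choose i) * (-1/2:ℂ)^j
        * Complex.exp (((2*(i:ℤ) - (j:ℤ) - (n:ℤ) : ℤ):ℂ) * θ * Complex.I))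
      = (m.choose j : ℂ) * (j.choose i) * (-1/2:ℂ)^j
        * (if 2*(i:ℤ) - (j:ℤ) - (n:ℤ) = 0 then (2*π:ℂ) else 0) := by
    intro j i
    rw [intervalIntegral.integral_const_mul, intA]
  simp_rw [hval]
  -- extend inner sums to range (m+1)
  have hext : ∀ j ∈ Finset.range (m+1),
      (∑ i ∈ Finset.range (j+1), (m.choose j : ℂ) * (j.choose i) * (-1/2:ℂ)^j
        * (if 2*(i:ℤ) - (j:ℤ) - (n:ℤ) = 0 then (2*π:ℂ) else 0))
      = ∑ i ∈ Finset.range (m+1), (m.choose j : ℂ) * (j.choose i) * (-1/2:ℂ)^j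
        * (if 2*(i:ℤ) - (j:ℤ) - (n:ℤ) = 0 then (2*π:ℂ) else 0) := by
    intro j hj
    apply Finset.sum_subset
    · apply Finset.range_subset_range.mpr
      have := Finset.mem_range.mp hj; omega
    · intro i hi hni
      rw [Nat.choose_eq_zero_of_lt (show j < i by
        simp only [Finset.mem_range] at hi hni; omega)]
      simp
  rw [Finset.sum_congr rfl hext, ← Finset.sum_product']
  rw [← Finset.sum_filter_of_ne (p := fun x : ℕ × ℕ => 2*x.2 = x.1 + n ∧ x.2 ≤ x.1)
    (by
      intro x hx hne
      constructor
      · by_contra hc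
        exact hne (by
          rw [if_neg (show ¬(2*(x.2:ℤ) - (x.1:ℤ) - (n:ℤ) = 0) from by omega), mul_zero])
      · by_contra hc
        exact hne (by rw [Nat.choose_eq_zero_of_lt (show x.1 < x.2 from by omega)]; simp))]
  rw [Finset.mul_sum]
  refine Finset.sum_nbij' (fun x => x.2 - n) (fun k => ((n+2*k, n+k) : ℕ × ℕ)) ?_ ?_ ?_ ?_ ?_
  · rintro ⟨a,b⟩ hx
    dsimp only
    simp only [Finset.mem_filter, Finset.mem_product, Finset.mem_range] at hx
    simp only [Finset.mem_range]
    omega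
  · intro k hk
    simp only [Finset.mem_range] at hk
    simp only [Finset.mem_filter, Finset.mem_product, Finset.mem_range]
    omega
  · rintro ⟨a,b⟩ hx
    dsimp only
    simp only [Finset.mem_filter, Finset.mem_product, Finset.mem_range] at hx
    rw [Prod.mk.injEq]
    omega
  · intro k hk
    dsimp only
    simp only [Finset.mem_range] at hk
    omega
  · rintro ⟨a,b⟩ hx
    dsimp only
    simp only [Finset.mem_filter, Finset.mem_product, Finset.mem_range] at hx
    obtain ⟨⟨ha, hb⟩, hab, hba⟩ := hx
    have hbn : n ≤ b := by omega
    rw [if_pos (by omega)]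
    rw [show n+2*(b-n) = a from by omega, show m-n-2*(b-n) = m - a from by omega,
      show n+(b-n) = b from by omega]
    have h2 := Nat.choose_mul_factorial_mul_factorial (show b ≤ a from hba)
    rw [show a - b = b - n from by omega] at h2
    have h1 := Nat.choose_mul_factorial_mul_factorial (show a ≤ m from by omega)
    have hfac : m.choose a * (a.choose b * b.factorial * (b-n).factorial)
        * (m-a).factorial = m.factorial := by
      rw [h2]; exact h1
    have hfacC : ((m.factorial : ℕ) : ℂ) = (m.choose a : ℂ) * ((a.choose b : ℂ)
        * (b.factorial : ℂ) * ((b-n).factorial : ℂ)) * ((m-a).factorial : ℂ) := by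
      exact_mod_cast congrArg (Nat.cast (R := ℂ)) hfac.symm
    rw [hfacC]
    have n1 : ((m-a).factorial : ℂ) ≠ 0 := Nat.cast_ne_zero.mpr (Nat.factorial_ne_zero _)
    have n2 : ((b-n).factorial : ℂ) ≠ 0 := Nat.cast_ne_zero.mpr (Nat.factorial_ne_zero _)
    have n3 : ((b).factorial : ℂ) ≠ 0 := Nat.cast_ne_zero.mpr (Nat.factorial_ne_zero _)
    field_simp

open Real Nat in
/-- for an integer `m ≥ 1` and `μ = (1/Z)(1-cos θ)^m dθ/(2π)`, the
Carathéodory function is the polynomial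
`F(z) = 1 + 2 (m!)²/(2m-1)!! Σ_{n=1}^{m} Σ_{k=0}^{⌊(m-n)/2⌋} (-1/2)^{n+2k}/((m-n-2k)! k! (n+k)!) z^n`. -/
theorem caratheodory_one_minus_cos_pow_int (m : ℕ) (hm : 1 ≤ m)
    (Z : ℝ) (hZ : Z = ∫ θ in (0:ℝ)..(2*π), (1 - Real.cos θ) ^ m / (2*π))
    (z : ℂ) (hz : ‖z‖ < 1) :
    (∫ θ in (0:ℝ)..(2*π),
        (Complex.exp (θ * Complex.I) + z) / (Complex.exp (θ * Complex.I) - z)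
          * (((1 - Real.cos θ) ^ m / (Z * (2*π)) : ℝ) : ℂ))
      = 1 + 2 * ((m.factorial : ℂ) ^ 2 / ((2*m - 1)‼ : ℕ)) *
          ∑ n ∈ Finset.Icc 1 m, ∑ k ∈ Finset.range ((m - n)/2 + 1),
            (-1/2 : ℂ) ^ (n + 2*k) /
              (((m - n - 2*k).factorial : ℂ) * (k.factorial : ℂ) * ((n + k).factorial : ℂ)) * z ^ n := by
  have hπ : (0:ℝ) < π := Real.pi_pos
  have h2π : (0:ℝ) < 2*π := by linarith
  -- value of Z
  have hIint : (∫ θ in (0:ℝ)..(2*π), (1 - Real.cos θ) ^ m) = Z * (2*π) := by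
    rw [hZ, intervalIntegral.integral_div]
    field_simp
  have hZval : Z = ((2*m).choose m : ℝ) / 2^m := by
    have hA := intJ_A m 0
    simp only [Nat.cast_zero, neg_zero, zero_mul, Complex.exp_zero, one_mul, pow_zero,
      Nat.add_zero] at hA
    simp_rw [← Complex.ofReal_pow, intervalIntegral.integral_ofReal, hIint] at hA
    have h2 : (Z*(2*π)) = 2*π*(((2*m).choose m:ℝ)/2^m) := by
      rw [show ((2:ℂ)*(π:ℝ)*((((2*m).choose m : ℕ):ℂ)/2^m))
        = ((2*π*((((2*m).choose m : ℕ):ℝ)/2^m) : ℝ) : ℂ) from by push_cast; ring] at hA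
      exact_mod_cast hA
    have h3 : Z*(2*π) = (((2*m).choose m:ℝ)/2^m)*(2*π) := by linarith
    exact mul_right_cancel₀ (ne_of_gt h2π) h3
  have hCpos : 0 < (((2*m).choose m : ℕ) : ℝ) := by
    exact_mod_cast Nat.choose_pos (show m ≤ 2*m by omega)
  have hZpos : 0 < Z := by rw [hZval]; positivity
  have hZne : (Z:ℂ) ≠ 0 := Complex.ofReal_ne_zero.mpr (ne_of_gt hZpos)
  have hπC : ((π:ℝ):ℂ) ≠ 0 := Complex.ofReal_ne_zero.mpr (ne_of_gt hπ)
  have hfacne : (m.factorial : ℂ) ≠ 0 := Nat.cast_ne_zero.mpr (Nat.factorial_ne_zero m)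
  have hdfne : (((2*m-1)‼ : ℕ) : ℂ) ≠ 0 := Nat.cast_ne_zero.mpr (Nat.doubleFactorial_pos _).ne'
  -- double factorial identity
  have hdf : (2*m).choose m * m.factorial = 2^m * (2*m-1)‼ := by
    have h1 : (2*m).choose m * m.factorial * m.factorial = (2*m).factorial := by
      have h := Nat.choose_mul_factorial_mul_factorial (show m ≤ 2*m by omega)
      rwa [show 2*m - m = m from by omega] at h
    have h3 := Nat.factorial_eq_mul_doubleFactorial (2*m-1)
    rw [show 2*m-1+1 = 2*m from by omega, Nat.doubleFactorial_two_mul m] at h3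
    have h4 : (2*m).choose m * m.factorial * m.factorial
        = (2^m * (2*m-1)‼) * m.factorial := by
      rw [h1, h3]; ring
    exact Nat.eq_of_mul_eq_mul_right m.factorial_pos h4
  have hZC : (Z:ℂ) = (((2*m-1)‼ : ℕ) : ℂ) / (m.factorial : ℂ) := by
    rw [hZval]
    push_cast
    rw [div_eq_div_iff (pow_ne_zero m (two_ne_zero (α := ℂ))) hfacne]
    have := congrArg (Nat.cast (R:=ℂ)) hdf
    push_cast at this
    linear_combination this
  -- nonvanishing of the kernel denominator
  have hwne : ∀ θ:ℝ, Complex.exp (θ*Complex.I) - z ≠ 0 := by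
    intro θ hcon
    rw [sub_eq_zero] at hcon
    have habs : ‖Complex.exp (θ*Complex.I)‖ = 1 := Complex.norm_exp_ofReal_mul_I θ
    rw [hcon] at habs
    rw [habs] at hz
    exact lt_irrefl _ hz
  have hSabs : ∀ θ:ℝ, ‖Complex.exp (-(θ*Complex.I))‖ = 1 := by
    intro θ
    rw [show -((θ:ℂ)*Complex.I) = ((-θ : ℝ):ℂ)*Complex.I from by push_cast; ring]
    exact Complex.norm_exp_ofReal_mul_I (-θ)
  have hDcont : Continuous (fun θ:ℝ => (((1 - Real.cos θ)^m / (Z*(2*π)) : ℝ) : ℂ)) := by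
    apply Complex.continuous_ofReal.comp
    fun_prop
  have hgc : Continuous (fun θ:ℝ => ((Complex.exp (θ*Complex.I) + z)/(Complex.exp (θ*Complex.I) - z) - 1)
      * (((1 - Real.cos θ)^m / (Z*(2*π)) : ℝ) : ℂ)) := by
    apply Continuous.mul ?_ hDcont
    apply Continuous.sub ?_ continuous_const
    exact Continuous.div (by fun_prop) (by fun_prop) hwne
  have hsplit : ∀ θ:ℝ, (Complex.exp (θ*Complex.I) + z)/(Complex.exp (θ*Complex.I) - z)
      * (((1 - Real.cos θ)^m / (Z*(2*π)) : ℝ) : ℂ)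
      = (((1 - Real.cos θ)^m / (Z*(2*π)) : ℝ) : ℂ)
        + ((Complex.exp (θ*Complex.I) + z)/(Complex.exp (θ*Complex.I) - z) - 1)
          * (((1 - Real.cos θ)^m / (Z*(2*π)) : ℝ) : ℂ) := fun θ => by ring
  simp_rw [hsplit]
  rw [intervalIntegral.integral_add (hDcont.intervalIntegrable _ _) (hgc.intervalIntegrable _ _)]
  -- first part equals 1
  have hint1 : (∫ θ in (0:ℝ)..(2*π), (((1 - Real.cos θ)^m / (Z*(2*π)) : ℝ) : ℂ)) = 1 := by
    rw [intervalIntegral.integral_ofReal, intervalIntegral.integral_div, hIint]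
    rw [div_self (by positivity)]
    norm_num
  rw [hint1]
  congr 1
  -- geometric series expansion of the remainder
  have hgeo : ∀ θ:ℝ, ((Complex.exp (θ*Complex.I) + z)/(Complex.exp (θ*Complex.I) - z) - 1)
      * (((1 - Real.cos θ)^m / (Z*(2*π)) : ℝ) : ℂ)
      = ∑' k:ℕ, 2*(z*Complex.exp (-(θ*Complex.I)))^(k+1)
          * (((1 - Real.cos θ)^m / (Z*(2*π)) : ℝ) : ℂ) := by
    intro θ
    have hTS : Complex.exp (θ*Complex.I) * Complex.exp (-(θ*Complex.I)) = 1 := by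
      rw [← Complex.exp_add]; simp
    have hu : ‖z*Complex.exp (-(θ*Complex.I))‖ < 1 := by
      rw [norm_mul, hSabs θ, mul_one]
      exact hz
    have hsum : ∑' k:ℕ, 2*(z*Complex.exp (-(θ*Complex.I)))^(k+1)
          * (((1 - Real.cos θ)^m / (Z*(2*π)) : ℝ) : ℂ)
        = 2*(z*Complex.exp (-(θ*Complex.I))) * (((1 - Real.cos θ)^m / (Z*(2*π)) : ℝ) : ℂ)
            * (1 - z*Complex.exp (-(θ*Complex.I)))⁻¹ := by
      calc ∑' k:ℕ, 2*(z*Complex.exp (-(θ*Complex.I)))^(k+1)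
            * (((1 - Real.cos θ)^m / (Z*(2*π)) : ℝ) : ℂ)
          = ∑' k:ℕ, (2*(z*Complex.exp (-(θ*Complex.I)))
              * (((1 - Real.cos θ)^m / (Z*(2*π)) : ℝ) : ℂ)) * (z*Complex.exp (-(θ*Complex.I)))^k :=
            tsum_congr fun k => by ring
        _ = (2*(z*Complex.exp (-(θ*Complex.I))) * (((1 - Real.cos θ)^m / (Z*(2*π)) : ℝ) : ℂ))
              * ∑' k:ℕ, (z*Complex.exp (-(θ*Complex.I)))^k := tsum_mul_left
        _ = _ := by rw [tsum_geometric_of_norm_lt_one hu]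
    rw [hsum]
    have h1ne : (1 : ℂ) - z*Complex.exp (-(θ*Complex.I)) ≠ 0 := by
      intro hcon
      rw [sub_eq_zero] at hcon
      rw [← hcon] at hu
      simp at hu
    have hS : Complex.exp (-(θ*Complex.I)) = (Complex.exp (θ*Complex.I))⁻¹ :=
      eq_inv_of_mul_eq_one_left (by rwa [mul_comm] at hTS)
    have hTne : Complex.exp (θ*Complex.I) ≠ 0 := Complex.exp_ne_zero _
    rw [hS] at h1ne ⊢
    rw [show (1:ℂ) - z*(Complex.exp (θ*Complex.I))⁻¹
        = (Complex.exp (θ*Complex.I) - z) * (Complex.exp (θ*Complex.I))⁻¹ from by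
      field_simp, mul_inv, inv_inv, div_sub_one (hwne θ), div_eq_mul_inv]
    have hTT : (Complex.exp (θ*Complex.I))⁻¹ * Complex.exp (θ*Complex.I) = 1 :=
      inv_mul_cancel₀ hTne
    linear_combination (-(2*z*(((1 - Real.cos θ)^m / (Z*(2*π)) : ℝ) : ℂ)
      * (Complex.exp (θ*Complex.I) - z)⁻¹)) * hTT
  -- continuity and bounds
  have hfcont : ∀ k:ℕ, Continuous (fun θ:ℝ => 2*(z*Complex.exp (-(θ*Complex.I)))^(k+1)
      * (((1 - Real.cos θ)^m / (Z*(2*π)) : ℝ) : ℂ)) := by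
    intro k
    apply Continuous.mul ?_ hDcont
    fun_prop
  have h1c : ∀ θ:ℝ, (0:ℝ) ≤ 1 - Real.cos θ := by
    intro θ; nlinarith [Real.cos_le_one θ]
  have hDb : ∀ θ:ℝ, ‖(((1 - Real.cos θ)^m / (Z*(2*π)) : ℝ) : ℂ)‖ ≤ 2^m/(Z*(2*π)) := by
    intro θ
    rw [Complex.norm_real, Real.norm_eq_abs,
      abs_of_nonneg (div_nonneg (pow_nonneg (h1c θ) m) (by positivity))]
    gcongr
    · exact h1c θ
    · nlinarith [Real.neg_one_le_cos θ]
  have hzlt : ‖z‖ < 1 := by exact hz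
  have hnormval : ∀ (k:ℕ) (θ:ℝ), ‖2*(z*Complex.exp (-(θ*Complex.I)))^(k+1)
      * (((1 - Real.cos θ)^m / (Z*(2*π)) : ℝ) : ℂ)‖ ≤ 2*(2^m/(Z*(2*π))) * ‖z‖^(k+1) := by
    intro k θ
    rw [norm_mul, norm_mul, norm_pow, norm_mul, hSabs θ,
      mul_one, show ‖(2:ℂ)‖ = 2 from by norm_num]
    calc 2 * ‖z‖^(k+1) * ‖(((1 - Real.cos θ)^m / (Z*(2*π)) : ℝ) : ℂ)‖
        ≤ 2 * ‖z‖^(k+1) * (2^m/(Z*(2*π))) := by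
          gcongr
          exact hDb θ
      _ = 2*(2^m/(Z*(2*π))) * ‖z‖^(k+1) := by ring
  have hFint : ∀ k:ℕ, MeasureTheory.IntegrableOn
      (fun θ:ℝ => 2*(z*Complex.exp (-(θ*Complex.I)))^(k+1)
        * (((1 - Real.cos θ)^m / (Z*(2*π)) : ℝ) : ℂ)) (Set.Ioc 0 (2*π)) MeasureTheory.volume :=
    fun k => (hfcont k).integrableOn_Ioc
  have hFsum : Summable (fun k:ℕ => ∫ θ in Set.Ioc (0:ℝ) (2*π),
      ‖2*(z*Complex.exp (-(θ*Complex.I)))^(k+1)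
        * (((1 - Real.cos θ)^m / (Z*(2*π)) : ℝ) : ℂ)‖) := by
    have hmaj : Summable (fun k:ℕ => (2*(2^m/(Z*(2*π)))*(2*π)) * ‖z‖^(k+1)) := by
      apply Summable.mul_left
      apply Summable.congr ((summable_geometric_of_lt_one (norm_nonneg z) hzlt).mul_left ‖z‖)
      intro k
      rw [pow_succ]
      ring
    apply Summable.of_nonneg_of_le
      (fun k => MeasureTheory.integral_nonneg (fun θ => norm_nonneg _)) (fun k => ?_) hmaj
    calc (∫ θ in Set.Ioc (0:ℝ) (2*π), ‖2*(z*Complex.exp (-(θ*Complex.I)))^(k+1)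
          * (((1 - Real.cos θ)^m / (Z*(2*π)) : ℝ) : ℂ)‖)
        ≤ ∫ _θ in Set.Ioc (0:ℝ) (2*π), 2*(2^m/(Z*(2*π))) * ‖z‖^(k+1) := by
          apply MeasureTheory.setIntegral_mono_on ((hfcont k).norm.integrableOn_Ioc)
            (MeasureTheory.integrableOn_const measure_Ioc_lt_top.ne) measurableSet_Ioc
          intro θ _
          exact hnormval k θ
      _ = (2*(2^m/(Z*(2*π)))*(2*π)) * ‖z‖^(k+1) := by
          rw [MeasureTheory.setIntegral_const, Real.volume_real_Ioc_of_le (by linarith), smul_eq_mul]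
          ring
  have hswap : (∫ θ in (0:ℝ)..(2*π), ((Complex.exp (θ*Complex.I) + z)/(Complex.exp (θ*Complex.I) - z) - 1)
        * (((1 - Real.cos θ)^m / (Z*(2*π)) : ℝ) : ℂ))
      = ∑' k:ℕ, ∫ θ in (0:ℝ)..(2*π), 2*(z*Complex.exp (-(θ*Complex.I)))^(k+1)
          * (((1 - Real.cos θ)^m / (Z*(2*π)) : ℝ) : ℂ) := by
    rw [intervalIntegral.integral_of_le (le_of_lt h2π)]
    simp_rw [hgeo]
    rw [← MeasureTheory.integral_tsum_of_summable_integral_norm hFint hFsum]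
    exact tsum_congr fun k => (intervalIntegral.integral_of_le (le_of_lt h2π)).symm
  rw [hswap]
  have hck : ∀ k:ℕ, (∫ θ in (0:ℝ)..(2*π), 2*(z*Complex.exp (-(θ*Complex.I)))^(k+1)
        * (((1 - Real.cos θ)^m / (Z*(2*π)) : ℝ) : ℂ))
      = (2*z^(k+1)/((Z:ℂ)*(2*(π:ℂ))))
        * (∫ θ in (0:ℝ)..(2*π), Complex.exp (-((k+1:ℕ):ℂ)*θ*Complex.I)
            * ((1 - Real.cos θ : ℝ):ℂ)^m) := by
    intro k
    rw [← intervalIntegral.integral_const_mul]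
    apply intervalIntegral.integral_congr
    intro θ _
    dsimp only
    have hem : (Complex.exp (-(θ*Complex.I)))^(k+1) = Complex.exp (-((k+1:ℕ):ℂ)*θ*Complex.I) := by
      rw [← Complex.exp_nat_mul]; congr 1; push_cast; ring
    have hDeq : (((1 - Real.cos θ)^m / (Z*(2*π)) : ℝ) : ℂ)
        = ((1 - Real.cos θ:ℝ):ℂ)^m / ((Z:ℂ)*(2*(π:ℂ))) := by push_cast; ring
    rw [mul_pow, hem, hDeq]
    ring
  rw [tsum_congr hck]
  rw [tsum_eq_sum (s := Finset.range m) (fun k hk => by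
    rw [intJ_A m (k+1), Nat.choose_eq_zero_of_lt (show 2*m < m + (k+1) by
      simp only [Finset.mem_range] at hk; omega)]
    simp)]
  rw [Finset.mul_sum, ← Finset.Ico_add_one_right_eq_Icc 1 m, Finset.sum_Ico_eq_sum_range]
  apply Finset.sum_congr (by norm_num)
  intro k hk
  have hk1 : k + 1 ≤ m := by simp only [Finset.mem_range] at hk; omega
  simp only [show 1 + k = k + 1 from Nat.add_comm 1 k]
  rw [intJ_B m (k+1) hk1, hZC, ← Finset.sum_mul]
  field_simp
end

section
/- Let m ≥ 1 be an integer, let Z = ∫₀^{2π} (1 − cos θ)^m dθ/(2π), and for n ≥ 1 let c_n = (1/Z) ∫₀^{2π} e^{−inθ} (1 − cos θ)^m dθ/(2π) be the n-th moment (Fourier coefficient) of the probability measure (1/Z)(1 − cos θ)^m dθ/(2π). Then c_n = √π · 2^{−m} · (Γ(m+1)/Γ(m+1/2)) · Σ_{l=0}^{⌊(m−n)/2⌋} binom(m, n+2l) · binom(n+2l, l) · (−1/2)^{n+2l}, where the sum is empty (and c_n = 0) when n > m. -/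
open Real Finset intervalIntegral

-- Fourier orthogonality
lemma fourier_int (N : ℤ) :
    (∫ θ in (0:ℝ)..(2*π), Complex.exp ((N:ℂ) * θ * Complex.I))
      = if N = 0 then (2*π : ℂ) else 0 := by
  rcases eq_or_ne N 0 with h | h
  · simp [h]
  · rw [if_neg h]
    have hc : (N:ℂ) * Complex.I ≠ 0 := by
      simp [Complex.I_ne_zero, h]
    have h1 : ∀ θ:ℝ, (N:ℂ) * θ * Complex.I = ((N:ℂ)*Complex.I) * θ := fun θ => by ring
    simp_rw [h1]
    rw [integral_exp_mul_complex hc]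
    have h2 : ((N:ℂ)*Complex.I) * ((2*π:ℝ):ℂ) = N * (2*π*Complex.I) := by push_cast; ring
    rw [h2, Complex.exp_int_mul_two_pi_mul_I]
    simp

lemma pointwise (m n : ℕ) (θ : ℝ) :
    Complex.exp (-(n:ℂ) * θ * Complex.I) * ((1:ℂ) - Complex.cos θ)^m
      = ∑ k ∈ range (m+1), ∑ j ∈ range (k+1),
          ((m.choose k : ℂ) * (-1/2)^k * (k.choose j : ℂ)) *
            Complex.exp (((2*(j:ℤ) - k - n : ℤ):ℂ) * θ * Complex.I) := by
  have hcos : ((1:ℂ) - Complex.cos θ)^m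
      = ∑ k ∈ range (m+1), (m.choose k : ℂ) * (-1/2)^k *
          (Complex.exp ((θ:ℂ)*Complex.I) + Complex.exp (-(θ:ℂ)*Complex.I))^k := by
    have h0 : (1:ℂ) - Complex.cos θ
        = (-1/2) * (Complex.exp ((θ:ℂ)*Complex.I) + Complex.exp (-(θ:ℂ)*Complex.I)) + 1 := by
      have h := Complex.two_cos (θ:ℂ)
      linear_combination (-1/2 : ℂ) * h
    rw [h0, add_pow]
    refine Finset.sum_congr rfl fun k hk => ?_
    rw [mul_pow]
    ring
  rw [hcos, Finset.mul_sum]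
  refine Finset.sum_congr rfl fun k hk => ?_
  rw [add_pow, Finset.mul_sum, Finset.mul_sum]
  refine Finset.sum_congr rfl fun j hj => ?_
  have hj' : j ≤ k := Nat.lt_succ_iff.mp (Finset.mem_range.mp hj)
  have hexp : Complex.exp (-(n:ℂ)*θ*Complex.I) *
      (Complex.exp ((θ:ℂ)*Complex.I)^j * Complex.exp (-(θ:ℂ)*Complex.I)^(k-j))
      = Complex.exp (((2*(j:ℤ) - k - n : ℤ):ℂ) * θ * Complex.I) := by
    rw [← Complex.exp_nat_mul, ← Complex.exp_nat_mul, ← Complex.exp_add, ← Complex.exp_add]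
    congr 1
    have hkj : ((k - j : ℕ):ℂ) = (k:ℂ) - (j:ℂ) := by
      push_cast [Nat.cast_sub hj']; ring
    rw [hkj]
    push_cast
    ring
  linear_combination ((m.choose k : ℂ) * (-1/2)^k * (k.choose j : ℂ)) * hexp

lemma my_inner_sum (n k : ℕ) (a : ℂ) :
    (∑ j ∈ range (k+1), ((k.choose j : ℂ)) * (if (2*(j:ℤ) - k - n = 0) then a else 0))
      = if (n ≤ k ∧ (k + n) % 2 = 0) then ((k.choose ((k+n)/2) : ℂ)) * a else 0 := by
  by_cases hP : n ≤ k ∧ (k + n) % 2 = 0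
  · rw [if_pos hP]
    obtain ⟨h1, h2⟩ := hP
    set j₀ := (k+n)/2 with hj₀
    have hj₀mem : j₀ ∈ range (k+1) := by
      rw [Finset.mem_range]; omega
    rw [Finset.sum_eq_single_of_mem j₀ hj₀mem]
    · rw [if_pos (by omega)]
    · intro j hj hne
      rw [if_neg (by
        rw [Finset.mem_range] at hj
        omega), mul_zero]
  · rw [if_neg hP]
    refine Finset.sum_eq_zero fun j hj => ?_
    rw [Finset.mem_range] at hj
    rw [if_neg (by omega), mul_zero]

lemma my_outer_sum (m n : ℕ) (a : ℂ) :
    (∑ k ∈ range (m+1), ((m.choose k : ℂ) * (-1/2)^k) *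
        (if (n ≤ k ∧ (k + n) % 2 = 0) then ((k.choose ((k+n)/2) : ℂ)) * a else 0))
      = ∑ l ∈ range ((m - n)/2 + 1),
          ((m.choose (n + 2*l) : ℂ) * ((n + 2*l).choose l : ℂ) * (-1/2 : ℂ) ^ (n + 2*l)) * a := by
  have key : (∑ k ∈ range (m+1), ((m.choose k : ℂ) * (-1/2)^k) *
        (if (n ≤ k ∧ (k + n) % 2 = 0) then ((k.choose ((k+n)/2) : ℂ)) * a else 0))
      = ∑ k ∈ (range (m+1)).filter (fun k => n ≤ k ∧ (k + n) % 2 = 0),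
          ((m.choose k : ℂ) * (-1/2)^k) * (((k.choose ((k+n)/2) : ℂ)) * a) := by
    rw [Finset.sum_filter]
    refine Finset.sum_congr rfl fun k hk => ?_
    by_cases h : n ≤ k ∧ (k + n) % 2 = 0
    · rw [if_pos h, if_pos h]
    · rw [if_neg h, if_neg h, mul_zero]
  rw [key]
  have hbij : ∑ k ∈ (range (m+1)).filter (fun k => n ≤ k ∧ (k + n) % 2 = 0),
          ((m.choose k : ℂ) * (-1/2)^k) * (((k.choose ((k+n)/2) : ℂ)) * a)
      = ∑ l ∈ (range ((m - n)/2 + 1)).filter (fun l => n + 2*l ≤ m),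
          ((m.choose (n + 2*l) : ℂ) * ((n + 2*l).choose l : ℂ) * (-1/2 : ℂ) ^ (n + 2*l)) * a := by
    refine Finset.sum_nbij' (fun k => (k - n)/2) (fun l => n + 2*l) ?_ ?_ ?_ ?_ ?_
    · intro k hk
      simp only [Finset.mem_filter, Finset.mem_range] at hk ⊢
      omega
    · intro l hl
      simp only [Finset.mem_filter, Finset.mem_range] at hl ⊢
      omega
    · intro k hk
      simp only [Finset.mem_filter, Finset.mem_range] at hk
      omega
    · intro l hl
      simp only [Finset.mem_filter, Finset.mem_range] at hl
      omega
    · intro k hk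
      simp only [Finset.mem_filter, Finset.mem_range] at hk
      have h1 : n + 2 * ((k - n)/2) = k := by omega
      have h2 : (k + n)/2 = k - (k-n)/2 := by omega
      rw [h1, h2, Nat.choose_symm (by omega)]
      ring
  rw [hbij]
  rw [← Finset.sum_filter_add_sum_filter_not (range ((m - n)/2 + 1)) (fun l => n + 2*l ≤ m)]
  have hz : ∑ l ∈ (range ((m - n)/2 + 1)).filter (fun l => ¬ n + 2*l ≤ m),
          ((m.choose (n + 2*l) : ℂ) * ((n + 2*l).choose l : ℂ) * (-1/2 : ℂ) ^ (n + 2*l)) * a = 0 := by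
    refine Finset.sum_eq_zero fun l hl => ?_
    simp only [Finset.mem_filter, Finset.mem_range, not_le] at hl
    rw [Nat.choose_eq_zero_of_lt hl.2]
    simp
  rw [hz, add_zero]

lemma my_prod_eq (m : ℕ) :
    (∏ i ∈ Finset.range m, (2*(i:ℝ)+1)/(2*i+2)) = (m.centralBinom : ℝ)/4^m := by
  induction m with
  | zero => simp [Nat.centralBinom]
  | succ k ih =>
    rw [Finset.prod_range_succ, ih]
    have h := Nat.succ_mul_centralBinom_succ k
    have h' : ((k:ℝ)+1) * ((k+1).centralBinom : ℝ) = 2*(2*(k:ℝ)+1)*(k.centralBinom : ℝ) := by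
      exact_mod_cast congrArg (fun x : ℕ => (x:ℝ)) h
    have hk : ((k:ℝ)+1) ≠ 0 := by positivity
    have h4 : (4:ℝ)^k ≠ 0 := by positivity
    field_simp
    linear_combination (-2 * (4:ℝ)^k) * h'

lemma my_Z_val (m : ℕ) :
    (∫ θ in (0:ℝ)..(2*π), (1 - Real.cos θ)^m) = 2*π * (m.centralBinom : ℝ) / 2^m := by
  have hpt : ∀ θ:ℝ, (1 - Real.cos θ)^m = 2^m * (fun u => Real.sin u ^ (2*m)) (θ/2) := by
    intro θ
    have h1 : Real.sin (θ/2)^2 = 1 - Real.cos (θ/2)^2 := Real.sin_sq (θ/2)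
    have h2 : Real.cos (θ/2)^2 = 1/2 + Real.cos (2*(θ/2))/2 := Real.cos_sq (θ/2)
    have h3 : (1 : ℝ) - Real.cos θ = 2 * Real.sin (θ/2)^2 := by
      rw [h1, h2]
      ring_nf
    dsimp only
    rw [h3, mul_pow, pow_mul]
  rw [intervalIntegral.integral_congr (fun θ _ => hpt θ)]
  rw [intervalIntegral.integral_const_mul]
  rw [intervalIntegral.integral_comp_div (f := fun u => Real.sin u ^ (2*m)) (c := (2:ℝ)) two_ne_zero]
  norm_num
  rw [integral_sin_pow_even, my_prod_eq]
  have h4 : (4:ℝ)^m = 2^m * 2^m := by rw [← mul_pow]; norm_num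
  field_simp [h4]
  rw [h4]
  ring

lemma my_const_val (m : ℕ) (hm : 1 ≤ m) :
    Real.sqrt π * 2 ^ (-(m:ℝ)) * (Real.Gamma (m + 1) / Real.Gamma (m + 1/2))
      = 2^m / (m.centralBinom : ℝ) := by
  have hdup := Real.Gamma_mul_Gamma_add_half (m:ℝ)
  -- Γ(m) = (m-1)!
  have hΓm : Real.Gamma (m:ℝ) = ((m-1).factorial : ℝ) := by
    have : (m:ℝ) = ((m-1:ℕ):ℝ) + 1 := by
      push_cast [Nat.cast_sub hm]; ring
    rw [this, Real.Gamma_nat_eq_factorial]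
  have hΓm1 : Real.Gamma ((m:ℝ) + 1) = (m.factorial : ℝ) := by
    exact_mod_cast Real.Gamma_nat_eq_factorial m
  have hΓ2m : Real.Gamma (2*(m:ℝ)) = ((2*m-1).factorial : ℝ) := by
    have : 2*(m:ℝ) = ((2*m-1:ℕ):ℝ) + 1 := by
      push_cast [Nat.cast_sub (by omega : 1 ≤ 2*m)]; ring
    rw [this, Real.Gamma_nat_eq_factorial]
  have hpow1 : (2:ℝ) ^ (-(m:ℝ)) = ((2:ℝ)^m)⁻¹ := by
    rw [Real.rpow_neg (by norm_num), Real.rpow_natCast]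
  have hpow2 : (2:ℝ) ^ (1 - 2*(m:ℝ)) = 2 / ((2:ℝ)^(2*m)) := by
    rw [Real.rpow_sub (by norm_num), Real.rpow_one]
    congr 1
    rw [← Real.rpow_natCast 2 (2*m)]
    congr 1
    push_cast; ring
  have hΓhalf_pos : 0 < Real.Gamma ((m:ℝ) + 1/2) :=
    Real.Gamma_pos_of_pos (by positivity)
  have hfac : ∀ k : ℕ, ((k.factorial : ℝ)) ≠ 0 := fun k => by
    exact_mod_cast k.factorial_ne_zero
  -- central binom identity
  have hCB : (m.centralBinom : ℝ) * (m.factorial : ℝ) * (m.factorial : ℝ) = ((2*m).factorial : ℝ) := by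
    have := Nat.choose_mul_factorial_mul_factorial (show m ≤ 2*m by omega)
    have h2 : 2*m - m = m := by omega
    rw [h2] at this
    exact_mod_cast congrArg (fun x : ℕ => (x:ℝ)) this
  have h2mf : ((2*m).factorial : ℝ) = (2*m) * ((2*m-1).factorial : ℝ) := by
    have : 2*m = (2*m-1) + 1 := by omega
    rw [this, Nat.factorial_succ]
    push_cast [Nat.cast_sub (by omega : 1 ≤ 2*m)]
    ring
  have hmf : (m.factorial : ℝ) = m * ((m-1).factorial : ℝ) := by
    have : m = (m-1) + 1 := by omega
    rw [this, Nat.factorial_succ]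
    push_cast [Nat.cast_sub hm]
    ring
  have hCBne : (m.centralBinom : ℝ) ≠ 0 := by
    exact_mod_cast m.centralBinom_ne_zero
  -- solve for Gamma (m + 1/2)
  rw [hΓm, hΓ2m, hpow2] at hdup
  rw [hpow1, hΓm1]
  have hsqrt : Real.sqrt π ≠ 0 := by positivity
  have h2m2 : (2:ℝ)^(2*m) = 2^m * 2^m := by rw [← pow_add]; congr 1; omega
  have hmpos : (0:ℝ) < m := by exact_mod_cast hm
  field_simp at hdup ⊢
  rw [h2m2] at hdup
  have hne : ((m:ℝ) * ((m-1).factorial : ℝ)) ≠ 0 :=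
    mul_ne_zero (ne_of_gt hmpos) (hfac _)
  refine mul_left_cancel₀ hne ?_
  linear_combination (-(m:ℝ)) * hdup + Real.sqrt π * hCB + Real.sqrt π * h2mf
    + (-(Real.sqrt π * (m.centralBinom : ℝ) * (m.factorial : ℝ))) * hmf

open Real in
/-- the moments of the probability measure `(1/Z)(1-cos θ)^m dθ/(2π)`
are `c_n = √π 2^{-m} (Γ(m+1)/Γ(m+1/2)) Σ_{l=0}^{⌊(m-n)/2⌋} C(m,n+2l) C(n+2l,l) (-1/2)^{n+2l}`
(the sum being empty, and `c_n = 0`, when `n > m`). -/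
theorem moments_one_minus_cos_pow (m : ℕ) (hm : 1 ≤ m) (n : ℕ) (hn : 1 ≤ n)
    (Z : ℝ) (hZ : Z = ∫ θ in (0:ℝ)..(2*π), (1 - Real.cos θ) ^ m / (2*π)) :
    (1/(Z:ℂ)) * ∫ θ in (0:ℝ)..(2*π),
        Complex.exp (-(n:ℂ) * θ * Complex.I) * (((1 - Real.cos θ) ^ m / (2*π) : ℝ) : ℂ)
      = ((Real.sqrt π * 2 ^ (-(m:ℝ)) * (Real.Gamma (m + 1) / Real.Gamma (m + 1/2)) *
          ∑ l ∈ Finset.range ((m - n)/2 + 1),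
            ((m.choose (n + 2*l) : ℝ) * ((n + 2*l).choose l : ℝ) * (-1/2 : ℝ) ^ (n + 2*l)) : ℝ) : ℂ) := by
  have hπ : (0:ℝ) < 2*π := by positivity
  -- value of Z
  have hZ' : Z = (m.centralBinom : ℝ)/2^m := by
    rw [hZ, intervalIntegral.integral_div, my_Z_val]
    field_simp
  -- rewrite the integrand
  have hint : ∀ θ:ℝ, Complex.exp (-(n:ℂ) * θ * Complex.I) * (((1 - Real.cos θ) ^ m / (2*π) : ℝ) : ℂ)
      = (Complex.exp (-(n:ℂ) * θ * Complex.I) * ((1:ℂ) - Complex.cos θ)^m) / ((2*π:ℝ):ℂ) := by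
    intro θ
    push_cast [Complex.ofReal_cos]
    ring
  -- compute the integral of exp * (1-cos)^m
  have hI : (∫ θ in (0:ℝ)..(2*π), Complex.exp (-(n:ℂ)*θ*Complex.I) * ((1:ℂ) - Complex.cos θ)^m)
      = ∑ k ∈ range (m+1), ∑ j ∈ range (k+1),
          ((m.choose k : ℂ) * (-1/2)^k * (k.choose j : ℂ)) *
            (if (2*(j:ℤ) - k - n = 0) then (2*π:ℂ) else 0) := by
    rw [intervalIntegral.integral_congr (fun θ _ => pointwise m n θ)]
    rw [intervalIntegral.integral_finset_sum (fun k _ => by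
      apply Continuous.intervalIntegrable
      fun_prop)]
    refine Finset.sum_congr rfl fun k hk => ?_
    rw [intervalIntegral.integral_finset_sum (fun j _ => by
      apply Continuous.intervalIntegrable
      fun_prop)]
    refine Finset.sum_congr rfl fun j hj => ?_
    rw [intervalIntegral.integral_const_mul, fourier_int]
  -- evaluate the double sum
  have hsum : (∑ k ∈ range (m+1), ∑ j ∈ range (k+1),
          ((m.choose k : ℂ) * (-1/2)^k * (k.choose j : ℂ)) *
            (if (2*(j:ℤ) - k - n = 0) then (2*π:ℂ) else 0))
      = ∑ l ∈ range ((m - n)/2 + 1),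
          ((m.choose (n + 2*l) : ℂ) * ((n + 2*l).choose l : ℂ) * (-1/2 : ℂ) ^ (n + 2*l)) * ((2*π:ℂ)) := by
    calc (∑ k ∈ range (m+1), ∑ j ∈ range (k+1),
          ((m.choose k : ℂ) * (-1/2)^k * (k.choose j : ℂ)) *
            (if (2*(j:ℤ) - k - n = 0) then (2*π:ℂ) else 0))
        = ∑ k ∈ range (m+1), ((m.choose k : ℂ)*(-1/2)^k) *
            ∑ j ∈ range (k+1), ((k.choose j : ℂ)) * (if (2*(j:ℤ) - k - n = 0) then (2*π:ℂ) else 0) := by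
          refine Finset.sum_congr rfl fun k _ => ?_
          rw [Finset.mul_sum]
          exact Finset.sum_congr rfl fun j _ => by ring
      _ = ∑ k ∈ range (m+1), ((m.choose k : ℂ)*(-1/2)^k) *
            (if (n ≤ k ∧ (k + n) % 2 = 0) then ((k.choose ((k+n)/2) : ℂ)) * (2*π:ℂ) else 0) := by
          exact Finset.sum_congr rfl fun k _ => by rw [my_inner_sum n k (2*π:ℂ)]
      _ = _ := my_outer_sum m n (2*π:ℂ)
  -- put the integral together
  have hA : (∫ θ in (0:ℝ)..(2*π), Complex.exp (-(n:ℂ) * θ * Complex.I) * (((1 - Real.cos θ) ^ m / (2*π) : ℝ) : ℂ))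
      = ((∑ l ∈ Finset.range ((m - n)/2 + 1),
            ((m.choose (n + 2*l) : ℝ) * ((n + 2*l).choose l : ℝ) * (-1/2 : ℝ) ^ (n + 2*l)) : ℝ) : ℂ) := by
    rw [intervalIntegral.integral_congr (fun θ _ => hint θ)]
    rw [intervalIntegral.integral_div, hI, hsum, ← Finset.sum_mul]
    have h2π : (2*(π:ℂ)) ≠ 0 := by
      exact_mod_cast ne_of_gt hπ
    push_cast
    rw [mul_div_cancel_right₀ _ h2π]
  rw [hA, hZ', my_const_val m hm]
  have hCBne : ((m.centralBinom : ℝ)) ≠ 0 := by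
    exact_mod_cast m.centralBinom_ne_zero
  have h2ne : ((2:ℝ)^m) ≠ 0 := by positivity
  push_cast
  field_simp
end

section
/- Let N ≥ 1 and let α_1, …, α_N be real numbers. Consider the ordered product of matrices over the ring of Laurent polynomials P(z) = [[1, α_N z^{−N}],[α_N z^N, 1]] ⋯ [[1, α_1 z^{−1}],[α_1 z, 1]] (factor of largest index on the left). Then the bottom-right entry of P equals 1 + Σ_{n≥1} δ_n z^n where δ_n = Σ ∏_{u=1}^{r} α_{i_u} α_{j_u}, the sum over all r ≥ 1 and multiindices 0 < i_1 < j_1 < i_2 < j_2 < ⋯ < i_r < j_r ≤ N with Σ_{u}(j_u − i_u) = n; and the bottom-left entry of P equals Σ_{n≥1} γ_n z^n where γ_n = Σ ∏_{u=1}^{r} α_{i_u} α_{j_u} · α_{i_{r+1}}, the sum over all r ≥ 0 and multiindices 0 < i_1 < j_1 < ⋯ < i_r < j_r < i_{r+1} ≤ N with Σ_u i_u − Σ_u j_u = n (including i_{r+1} in the first sum). -/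
open LaurentPolynomial in
/-- The ordered product `[[1, α_N z^{-N}],[α_N z^N, 1]] ⋯ [[1, α_1 z^{-1}],[α_1 z, 1]]` over the
ring of Laurent polynomials `ℝ[T;T⁻¹]` (factor of largest index on the left). -/
noncomputable def laurentProd (α : ℕ → ℝ) : ℕ → Matrix (Fin 2) (Fin 2) (LaurentPolynomial ℝ)
  | 0 => 1
  | k + 1 =>
      !![1, C (α (k+1)) * T (-((k+1 : ℕ) : ℤ));
         C (α (k+1)) * T (((k+1 : ℕ) : ℤ)), 1] * laurentProd α k

/-- `δ_n = Σ ∏_{u=1}^{r} α_{i_u} α_{j_u}`, the sum over all `r ≥ 1` and multiindices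
`0 < i_1 < j_1 < i_2 < ⋯ < i_r < j_r ≤ N` with `Σ_u (j_u - i_u) = n`.
Here `p.1 = r`, `p.2.1 = i`, `p.2.2 = j`. -/
noncomputable def deltaCoeff (α : ℕ → ℝ) (N n : ℕ) : ℝ :=
  ∑ᶠ (p : Σ r : ℕ, (Fin r → ℕ) × (Fin r → ℕ))
    (_ : 1 ≤ p.1 ∧ (∀ u, 0 < p.2.1 u) ∧ (∀ u, p.2.1 u < p.2.2 u) ∧
      (∀ u : Fin p.1, ∀ h : (u : ℕ) + 1 < p.1, p.2.2 u < p.2.1 ⟨(u : ℕ) + 1, h⟩) ∧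
      (∀ u, p.2.2 u ≤ N) ∧
      (∑ u : Fin p.1, ((p.2.2 u : ℤ) - (p.2.1 u : ℤ))) = n),
    ∏ u : Fin p.1, α (p.2.1 u) * α (p.2.2 u)

/-- `γ_n = Σ (∏_{u=1}^{r} α_{i_u} α_{j_u}) · α_{i_{r+1}}`, the sum over all `r ≥ 0` and
multiindices `0 < i_1 < j_1 < ⋯ < i_r < j_r < i_{r+1} ≤ N` with `Σ_u i_u - Σ_u j_u = n`
(including `i_{r+1}` in the first sum). Here `p.1 = r`, `p.2.1 = i`, `p.2.2 = j`. -/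
noncomputable def gammaCoeff (α : ℕ → ℝ) (N n : ℕ) : ℝ :=
  ∑ᶠ (p : Σ r : ℕ, (Fin (r+1) → ℕ) × (Fin r → ℕ))
    (_ : (∀ u, 0 < p.2.1 u) ∧
      (∀ u : Fin p.1, p.2.1 u.castSucc < p.2.2 u ∧ p.2.2 u < p.2.1 u.succ) ∧
      p.2.1 (Fin.last p.1) ≤ N ∧
      ((∑ u : Fin (p.1+1), (p.2.1 u : ℤ)) - (∑ u : Fin p.1, (p.2.2 u : ℤ))) = n),
    (∏ u : Fin (p.1+1), α (p.2.1 u)) * ∏ u : Fin p.1, α (p.2.2 u)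

namespace LPAux
open List Finset

def wsum : List ℕ → ℤ
  | [] => 0
  | a :: l => (a : ℤ) - wsum l

@[simp] theorem wsum_nil : wsum [] = 0 := rfl
@[simp] theorem wsum_cons (a : ℕ) (l : List ℕ) : wsum (a :: l) = (a : ℤ) - wsum l := rfl

def dlist : (r : ℕ) → (Fin r → ℕ) → (Fin r → ℕ) → List ℕ
  | 0, _, _ => []
  | r+1, i, j => j (Fin.last r) :: i (Fin.last r) :: dlist r (i ∘ Fin.castSucc) (j ∘ Fin.castSucc)

@[simp] theorem dlist_zero (i j : Fin 0 → ℕ) : dlist 0 i j = [] := rfl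
@[simp] theorem dlist_succ (r : ℕ) (i j : Fin (r+1) → ℕ) :
    dlist (r+1) i j
      = j (Fin.last r) :: i (Fin.last r) :: dlist r (i ∘ Fin.castSucc) (j ∘ Fin.castSucc) := rfl

theorem length_dlist : ∀ (r : ℕ) (i j : Fin r → ℕ), (dlist r i j).length = 2 * r
  | 0, _, _ => rfl
  | r+1, i, j => by simp [length_dlist r]; ring

theorem mem_dlist : ∀ (r : ℕ) (i j : Fin r → ℕ) (x : ℕ),
    x ∈ dlist r i j ↔ ∃ u, x = i u ∨ x = j u
  | 0, i, j, x => by simp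
  | r+1, i, j, x => by
      simp only [dlist_succ, List.mem_cons, mem_dlist r, Fin.exists_fin_succ',
        Function.comp_apply]
      aesop

theorem wsum_dlist : ∀ (r : ℕ) (i j : Fin r → ℕ),
    wsum (dlist r i j) = ∑ u : Fin r, ((j u : ℤ) - (i u : ℤ))
  | 0, _, _ => by simp
  | r+1, i, j => by
      simp only [dlist_succ, wsum_cons, wsum_dlist r, Fin.sum_univ_castSucc,
        Function.comp_apply]
      try ring

theorem prod_map_dlist (f : ℕ → ℝ) : ∀ (r : ℕ) (i j : Fin r → ℕ),
    ((dlist r i j).map f).prod = ∏ u : Fin r, f (i u) * f (j u)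
  | 0, _, _ => by simp
  | r+1, i, j => by
      simp only [dlist_succ, List.map_cons, List.prod_cons, prod_map_dlist f r,
        Fin.prod_univ_castSucc, Function.comp_apply]
      try ring

theorem head?_dlist (r : ℕ) (i j : Fin (r+1) → ℕ) :
    (dlist (r+1) i j).head? = some (j (Fin.last r)) := rfl

theorem chain'_dlist : ∀ (r : ℕ) (i j : Fin r → ℕ),
    (∀ u, i u < j u) → (∀ (u : Fin r) (h : (u : ℕ) + 1 < r), j u < i ⟨(u : ℕ) + 1, h⟩) →
    List.IsChain (· > ·) (dlist r i j)
  | 0, _, _, _, _ => List.isChain_nil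
  | r+1, i, j, hij, hji => by
      have hrest := chain'_dlist r (i ∘ Fin.castSucc) (j ∘ Fin.castSucc)
        (fun u => hij _) (fun u h => by
          have := hji (Fin.castSucc u) (by simpa using Nat.lt_succ_of_lt h)
          simpa using this)
      rw [dlist_succ, List.isChain_cons_cons]
      refine ⟨hij _, ?_⟩
      rw [List.isChain_cons]
      refine ⟨?_, hrest⟩
      intro y hy
      match r, i, j, hji, hy with
      | r+1, i, j, hji, hy =>
        rw [head?_dlist] at hy
        cases hy
        have := hji (Fin.castSucc (Fin.last r)) (by simp)
        simpa [Fin.last] using this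


-- injectivity
theorem dlist_inj : ∀ (r : ℕ) (i j i' j' : Fin r → ℕ),
    dlist r i j = dlist r i' j' → i = i' ∧ j = j'
  | 0, i, j, i', j', _ => ⟨funext fun u => u.elim0, funext fun u => u.elim0⟩
  | r+1, i, j, i', j', h => by
      simp only [dlist_succ, List.cons.injEq] at h
      obtain ⟨hj, hi, hrest⟩ := h
      obtain ⟨hi', hj'⟩ := dlist_inj r _ _ _ _ hrest
      constructor
      · funext u
        induction u using Fin.lastCases with
        | last => exact hi
        | cast u => exact congrFun hi' u
      · funext u
        induction u using Fin.lastCases with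
        | last => exact hj
        | cast u => exact congrFun hj' u

-- existence
theorem exists_dlist : ∀ (l : List ℕ), List.IsChain (· > ·) l → Even l.length →
    ∃ (r : ℕ) (i j : Fin r → ℕ),
      (∀ u, i u < j u) ∧ (∀ (u : Fin r) (h : (u : ℕ) + 1 < r), j u < i ⟨(u : ℕ) + 1, h⟩) ∧
      dlist r i j = l
  | [], _, _ => ⟨0, Fin.elim0, Fin.elim0, fun u => u.elim0, fun u => u.elim0, rfl⟩
  | [a], _, h => by simp at h
  | a :: b :: t, hc, he => by
      have hct : List.IsChain (· > ·) t := (List.isChain_cons.mp (List.isChain_cons_cons.mp hc).2).2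
      have het : Even t.length := by simpa [Nat.even_add_one, parity_simps] using he
      obtain ⟨r, i, j, hij, hji, hd⟩ := exists_dlist t hct het
      refine ⟨r+1, Fin.lastCases b i, Fin.lastCases a j, ?_, ?_, ?_⟩
      · intro u
        induction u using Fin.lastCases with
        | last => simpa using (List.isChain_cons_cons.mp hc).1
        | cast u => simpa using hij u
      · intro u h
        induction u using Fin.lastCases with
        | last => simp [Fin.last] at h
        | cast u =>
          simp only [Fin.lastCases_castSucc, Fin.coe_castSucc] at h ⊢
          rcases Nat.lt_or_ge ((u : ℕ) + 1) r with h' | h'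
          · have : (⟨(u : ℕ) + 1, h⟩ : Fin (r+1)) = Fin.castSucc ⟨(u : ℕ) + 1, h'⟩ := rfl
            rw [this, Fin.lastCases_castSucc]
            exact hji u h'
          · have hur : (u : ℕ) + 1 = r := le_antisymm (by omega) h'
            have : (⟨(u : ℕ) + 1, h⟩ : Fin (r+1)) = Fin.last r := by
              simp [Fin.last, Fin.ext_iff, hur]
            rw [this, Fin.lastCases_last]
            -- j u is the head of t = dlist r i j, with r = u+1 ≥ 1
            obtain ⟨s, rfl⟩ : ∃ s, r = s + 1 := ⟨(u : ℕ), hur.symm⟩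
            have hu : u = Fin.last s := by
              have : (u : ℕ) = s := by omega
              simp [Fin.ext_iff, this, Fin.last]
            subst hu
            have hht : t.head? = some (j (Fin.last s)) := by rw [← hd, head?_dlist]
            have hbt : List.IsChain (· > ·) (b :: t) := (List.isChain_cons_cons.mp hc).2
            match t, hht, hbt with
            | c :: t', hht, hbt =>
              simp only [List.head?_cons, Option.some.injEq] at hht
              subst hht
              exact (List.isChain_cons_cons.mp hbt).1
      · simp only [dlist_succ, Fin.lastCases_last]
        congr 1
        congr 1
        have h1 : (Fin.lastCases b i ∘ Fin.castSucc : Fin r → ℕ) = i := funext fun u => by simp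
        have h2 : (Fin.lastCases a j ∘ Fin.castSucc : Fin r → ℕ) = j := funext fun u => by simp
        rw [h1, h2, hd]




def glist (r : ℕ) (i : Fin (r+1) → ℕ) (j : Fin r → ℕ) : List ℕ :=
  i (Fin.last r) :: dlist r (i ∘ Fin.castSucc) j

theorem length_glist (r : ℕ) (i : Fin (r+1) → ℕ) (j : Fin r → ℕ) :
    (glist r i j).length = 2 * r + 1 := by simp [glist, length_dlist]

theorem mem_glist (r : ℕ) (i : Fin (r+1) → ℕ) (j : Fin r → ℕ) (x : ℕ) :
    x ∈ glist r i j ↔ (∃ u, x = i u) ∨ ∃ u, x = j u := by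
  simp only [glist, List.mem_cons, mem_dlist, Function.comp_apply]
  constructor
  · rintro (h | ⟨u, h | h⟩)
    · exact Or.inl ⟨Fin.last r, h⟩
    · exact Or.inl ⟨u.castSucc, h⟩
    · exact Or.inr ⟨u, h⟩
  · rintro (⟨u, h⟩ | ⟨u, h⟩)
    · induction u using Fin.lastCases with
      | last => exact Or.inl h
      | cast u => exact Or.inr ⟨u, Or.inl h⟩
    · exact Or.inr ⟨u, Or.inr h⟩

theorem wsum_glist (r : ℕ) (i : Fin (r+1) → ℕ) (j : Fin r → ℕ) :
    wsum (glist r i j) = (∑ u : Fin (r+1), (i u : ℤ)) - ∑ u : Fin r, (j u : ℤ) := by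
  simp only [glist, wsum_cons, wsum_dlist, Fin.sum_univ_castSucc, Function.comp_apply,
    Finset.sum_sub_distrib]
  ring

theorem prod_map_glist (f : ℕ → ℝ) (r : ℕ) (i : Fin (r+1) → ℕ) (j : Fin r → ℕ) :
    ((glist r i j).map f).prod = (∏ u : Fin (r+1), f (i u)) * ∏ u : Fin r, f (j u) := by
  simp only [glist, List.map_cons, List.prod_cons, prod_map_dlist, Fin.prod_univ_castSucc,
    Function.comp_apply, Finset.prod_mul_distrib]
  ring

theorem chain'_glist (r : ℕ) (i : Fin (r+1) → ℕ) (j : Fin r → ℕ)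
    (hc : ∀ u : Fin r, i u.castSucc < j u ∧ j u < i u.succ) :
    List.IsChain (· > ·) (glist r i j) := by
  have hd : List.IsChain (· > ·) (dlist r (i ∘ Fin.castSucc) j) := by
    refine chain'_dlist r _ _ (fun u => (hc u).1) (fun u h => ?_)
    have h2 : ((⟨(u : ℕ) + 1, h⟩ : Fin r).castSucc) = u.succ := by simp [Fin.ext_iff]
    rw [Function.comp_apply, h2]
    exact (hc u).2
  rw [glist, List.isChain_cons]
  refine ⟨?_, hd⟩
  intro y hy
  match r, i, j, hc, hy with
  | r+1, i, j, hc, hy =>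
    rw [head?_dlist] at hy
    cases hy
    have := (hc (Fin.last r)).2
    simpa [Fin.succ_last, Function.comp_apply] using this

theorem glist_inj (r : ℕ) (i i' : Fin (r+1) → ℕ) (j j' : Fin r → ℕ)
    (h : glist r i j = glist r i' j') : i = i' ∧ j = j' := by
  simp only [glist, List.cons.injEq] at h
  obtain ⟨hi, hrest⟩ := h
  obtain ⟨hi', hj'⟩ := dlist_inj r _ _ _ _ hrest
  refine ⟨funext fun u => ?_, hj'⟩
  induction u using Fin.lastCases with
  | last => exact hi
  | cast u => exact congrFun hi' u

theorem exists_glist (l : List ℕ) (hc : List.IsChain (· > ·) l) (ho : ¬ Even l.length) :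
    ∃ (r : ℕ) (i : Fin (r+1) → ℕ) (j : Fin r → ℕ),
      (∀ u : Fin r, i u.castSucc < j u ∧ j u < i u.succ) ∧ glist r i j = l := by
  match l, hc, ho with
  | [], _, ho => simp at ho
  | a :: t, hc, ho =>
    have hct : List.IsChain (· > ·) t := hc.tail
    have het : Even t.length := by
      rw [List.length_cons, Nat.even_add_one, not_not] at ho; exact ho
    obtain ⟨r, i0, j, hij, hji, hd⟩ := exists_dlist t hct het
    refine ⟨r, Fin.snoc i0 a, j, fun u => ⟨by simpa using hij u, ?_⟩, ?_⟩
    · rcases Nat.lt_or_ge ((u : ℕ) + 1) r with h' | h'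
      · have : (u.succ : Fin (r+1)) = Fin.castSucc ⟨(u : ℕ) + 1, h'⟩ := by
          simp [Fin.ext_iff]
        rw [this, Fin.snoc_castSucc]
        exact hji u h'
      · have hur : (u : ℕ) + 1 = r := le_antisymm u.2 h'
        have : (u.succ : Fin (r+1)) = Fin.last r := by simp [Fin.ext_iff, Fin.last, hur]
        rw [this, Fin.snoc_last]
        obtain ⟨s, rfl⟩ : ∃ s, r = s + 1 := ⟨(u : ℕ), hur.symm⟩
        have hht : t.head? = some (j (Fin.last s)) := by rw [← hd, head?_dlist]
        have hu : u = Fin.last s := by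
          have : (u : ℕ) = s := by omega
          simp [Fin.ext_iff, this, Fin.last]
        subst hu
        match t, hht, hc with
        | c :: t', hht, hc =>
          simp only [List.head?_cons, Option.some.injEq] at hht
          subst hht
          exact (List.isChain_cons_cons.mp hc).1
    · simp only [glist, Fin.snoc_last]
      congr 1
      have h1 : ((Fin.snoc i0 a : Fin (r+1) → ℕ) ∘ Fin.castSucc) = i0 := funext fun u => by simp
      rw [h1, hd]


noncomputable section
open Finset

/-- weight of a finset: alternating sum of its decreasing sort. -/
def wS (S : Finset ℕ) : ℤ := wsum (S.sort (· ≥ ·))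

theorem pairwise_sort_ge (S : Finset ℕ) : (S.sort (· ≥ ·)).Pairwise (· > ·) := by
  have h1 := Finset.pairwise_sort (α := ℕ) S (· ≥ ·)
  have h2 := Finset.sort_nodup (α := ℕ) S (· ≥ ·)
  rw [List.Nodup] at h2
  exact (h1.and h2).imp (fun {a b} h => lt_of_le_of_ne h.1 (Ne.symm h.2))

theorem sort_toFinset_of_pairwise {l : List ℕ} (h : l.Pairwise (· > ·)) :
    l.toFinset.sort (· ≥ ·) = l := by
  have hnd : l.Nodup := h.imp (fun {a b} h => Nat.ne_of_gt h)
  exact (List.toFinset_sort (· ≥ ·) hnd).mpr (h.imp fun {a b} h => le_of_lt h)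

theorem wS_toFinset {l : List ℕ} (h : l.Pairwise (· > ·)) : wS l.toFinset = wsum l := by
  rw [wS, sort_toFinset_of_pairwise h]

theorem prod_toFinset_of_pairwise (f : ℕ → ℝ) {l : List ℕ} (h : l.Pairwise (· > ·)) :
    ∏ x ∈ l.toFinset, f x = (l.map f).prod :=
  List.prod_toFinset f (h.imp fun {a b} h => Nat.ne_of_gt h)

theorem wS_insert {a : ℕ} {S : Finset ℕ} (ha : ∀ x ∈ S, x < a) (ha' : a ∉ S) :
    wS (insert a S) = (a : ℤ) - wS S := by
  rw [wS, Finset.sort_insert (· ≥ ·) (fun b hb => le_of_lt (ha b hb)) ha', wsum_cons, wS]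

theorem wsum_bounds : ∀ l : List ℕ, l.Pairwise (· > ·) → (∀ x ∈ l, 1 ≤ x) →
    0 ≤ wsum l ∧ (l ≠ [] → 1 ≤ wsum l) ∧
      ∀ b : ℤ, 0 ≤ b → (∀ x ∈ l, (x : ℤ) ≤ b) → wsum l ≤ b
  | [], _, _ => ⟨le_refl _, fun h => absurd rfl h, fun b hb _ => by simpa using hb⟩
  | a :: l, hp, h1 => by
      have hp' : l.Pairwise (· > ·) := hp.tail
      have hlt : ∀ x ∈ l, x < a := fun x hx => List.rel_of_pairwise_cons hp hx
      obtain ⟨ih0, _, ihb⟩ := wsum_bounds l hp' (fun x hx => h1 x (List.mem_cons_of_mem a hx))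
      have ha1 : 1 ≤ a := h1 a (List.mem_cons_self (a := a) (l := l))
      have key : wsum l ≤ (a : ℤ) - 1 := by
        refine ihb ((a : ℤ) - 1) (by exact_mod_cast Nat.le_sub_one_of_lt ha1) ?_
        intro x hx
        have := hlt x hx
        omega
      refine ⟨by rw [wsum_cons]; omega, fun _ => by rw [wsum_cons]; omega, ?_⟩
      intro b _ hble
      have hab : (a : ℤ) ≤ b := hble a (List.mem_cons_self (a := a) (l := l))
      rw [wsum_cons]; omega

theorem wS_bounds {N : ℕ} {S : Finset ℕ} (hS : S ⊆ Finset.Icc 1 N) :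
    0 ≤ wS S ∧ (S.Nonempty → 1 ≤ wS S) ∧ wS S ≤ (N : ℤ) := by
  have hp := pairwise_sort_ge S
  have h1 : ∀ x ∈ S.sort (· ≥ ·), 1 ≤ x := by
    intro x hx
    have := hS (by simpa using hx)
    simp only [Finset.mem_Icc] at this
    exact this.1
  obtain ⟨h0, hne, hb⟩ := wsum_bounds _ hp h1
  refine ⟨h0, fun h => hne ?_, hb N (by positivity) ?_⟩
  · obtain ⟨x, hx⟩ := h
    intro hnil
    have : x ∈ S.sort (· ≥ ·) := by simpa using hx
    simp [hnil] at this
  · intro x hx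
    have := hS (by simpa using hx)
    simp only [Finset.mem_Icc] at this
    exact_mod_cast this.2


noncomputable section
open Finset LaurentPolynomial

def evenSum (α : ℕ → ℝ) (N : ℕ) (ε : ℤ) : LaurentPolynomial ℝ :=
  ∑ S ∈ (Finset.Icc 1 N).powerset,
    if Even S.card then C (∏ x ∈ S, α x) * T (ε * wS S) else 0

def oddSum (α : ℕ → ℝ) (N : ℕ) (ε : ℤ) : LaurentPolynomial ℝ :=
  ∑ S ∈ (Finset.Icc 1 N).powerset,
    if ¬ Even S.card then C (∏ x ∈ S, α x) * T (ε * wS S) else 0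

theorem aux_insert (α : ℕ → ℝ) (N : ℕ) (ε : ℤ) (S : Finset ℕ) (hS : S ⊆ Finset.Icc 1 N) :
    (insert (N+1) S).card = S.card + 1 ∧
    (∏ x ∈ insert (N+1) S, α x) = α (N+1) * ∏ x ∈ S, α x ∧
    wS (insert (N+1) S) = ((N+1 : ℕ) : ℤ) - wS S := by
  have hna : (N+1) ∉ S := by
    intro h; have := hS h; simp only [Finset.mem_Icc] at this; omega
  have hlt : ∀ x ∈ S, x < N + 1 := by
    intro x hx; have := hS hx; simp only [Finset.mem_Icc] at this; omega
  exact ⟨Finset.card_insert_of_notMem hna, Finset.prod_insert hna, wS_insert hlt hna⟩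

theorem evenSum_succ (α : ℕ → ℝ) (N : ℕ) (ε : ℤ) :
    evenSum α (N+1) ε
      = evenSum α N ε + (C (α (N+1)) * T (ε * ((N+1 : ℕ) : ℤ))) * oddSum α N (-ε) := by
  rw [evenSum, ← Finset.insert_Icc_right_eq_Icc_add_one (by omega),
    Finset.sum_powerset_insert (by simp), oddSum, Finset.mul_sum]
  congr 1
  refine Finset.sum_congr rfl fun S hS => ?_
  obtain ⟨hc, hp, hw⟩ := aux_insert α N ε S (Finset.mem_powerset.mp hS)
  rw [hc, hp, hw]; simp only [Nat.even_add_one]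
  by_cases h : Even S.card
  · simp [h]
  · have he : ε * (((N+1 : ℕ) : ℤ) - wS S) = ε * ((N+1 : ℕ) : ℤ) + (-ε) * wS S := by ring
    simp only [h, not_false_iff, if_true, not_not, if_neg, he, T_add, map_mul]
    ring

theorem oddSum_succ (α : ℕ → ℝ) (N : ℕ) (ε : ℤ) :
    oddSum α (N+1) ε
      = oddSum α N ε + (C (α (N+1)) * T (ε * ((N+1 : ℕ) : ℤ))) * evenSum α N (-ε) := by
  rw [oddSum, ← Finset.insert_Icc_right_eq_Icc_add_one (by omega),
    Finset.sum_powerset_insert (by simp), evenSum, Finset.mul_sum]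
  congr 1
  refine Finset.sum_congr rfl fun S hS => ?_
  obtain ⟨hc, hp, hw⟩ := aux_insert α N ε S (Finset.mem_powerset.mp hS)
  rw [hc, hp, hw]; simp only [Nat.even_add_one]
  by_cases h : Even S.card
  · have he : ε * (((N+1 : ℕ) : ℤ) - wS S) = ε * ((N+1 : ℕ) : ℤ) + (-ε) * wS S := by ring
    simp only [h, not_not, not_true, if_neg, if_pos, he, T_add, map_mul, not_false_iff]
    ring
  · simp [h]

theorem entries (α : ℕ → ℝ) (N : ℕ) :
    laurentProd α N 0 0 = evenSum α N (-1) ∧ laurentProd α N 0 1 = oddSum α N (-1) ∧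
    laurentProd α N 1 0 = oddSum α N 1 ∧ laurentProd α N 1 1 = evenSum α N 1 := by
  induction N with
  | zero =>
    have h : (Finset.Icc 1 0 : Finset ℕ) = ∅ := by simp
    simp [laurentProd, evenSum, oddSum, h, wS, Matrix.one_apply]
  | succ N ih =>
    obtain ⟨h00, h01, h10, h11⟩ := ih
    have hmul : laurentProd α (N+1)
        = !![1, C (α (N+1)) * T (-((N+1 : ℕ) : ℤ));
             C (α (N+1)) * T (((N+1 : ℕ) : ℤ)), 1] * laurentProd α N := rfl
    have e00 : laurentProd α (N+1) 0 0
        = 1 * laurentProd α N 0 0 + (C (α (N+1)) * T (-((N+1 : ℕ) : ℤ))) * laurentProd α N 1 0 := by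
      rw [hmul, Matrix.mul_apply, Fin.sum_univ_two]; simp
    have e01 : laurentProd α (N+1) 0 1
        = 1 * laurentProd α N 0 1 + (C (α (N+1)) * T (-((N+1 : ℕ) : ℤ))) * laurentProd α N 1 1 := by
      rw [hmul, Matrix.mul_apply, Fin.sum_univ_two]; simp
    have e10 : laurentProd α (N+1) 1 0
        = (C (α (N+1)) * T (((N+1 : ℕ) : ℤ))) * laurentProd α N 0 0 + 1 * laurentProd α N 1 0 := by
      rw [hmul, Matrix.mul_apply, Fin.sum_univ_two]; simp
    have e11 : laurentProd α (N+1) 1 1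
        = (C (α (N+1)) * T (((N+1 : ℕ) : ℤ))) * laurentProd α N 0 1 + 1 * laurentProd α N 1 1 := by
      rw [hmul, Matrix.mul_apply, Fin.sum_univ_two]; simp
    refine ⟨?_, ?_, ?_, ?_⟩
    · rw [e00, h00, h10, evenSum_succ]
      norm_num
      try ring
    · rw [e01, h01, h11, oddSum_succ]
      norm_num
      try ring
    · rw [e10, h10, h00, oddSum_succ]
      norm_num
      try ring
    · rw [e11, h11, h01, evenSum_succ]
      norm_num
      try ring


open Finset LaurentPolynomial

noncomputable def DfinSet (N : ℕ) (n : ℕ) : Finset (Finset ℕ) :=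
  (Finset.Icc 1 N).powerset.filter fun S => Even S.card ∧ S.Nonempty ∧ wS S = (n : ℤ)

noncomputable def GfinSet (N : ℕ) (n : ℕ) : Finset (Finset ℕ) :=
  (Finset.Icc 1 N).powerset.filter fun S => ¬ Even S.card ∧ wS S = (n : ℤ)

theorem deltaCoeff_eq (α : ℕ → ℝ) (N n : ℕ) :
    deltaCoeff α N n = ∑ S ∈ DfinSet N n, ∏ x ∈ S, α x := by
  classical
  rw [← finsum_mem_coe_finset]
  unfold deltaCoeff
  refine finsum_mem_eq_of_bijOn (fun p => (dlist p.1 p.2.1 p.2.2).toFinset) ⟨?_, ?_, ?_⟩ ?_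
  · -- MapsTo
    rintro ⟨r, i, j⟩ ⟨hr, hpos, hij, hji, hjN, hsum⟩
    have hpw : (dlist r i j).Pairwise (· > ·) :=
      List.isChain_iff_pairwise.mp (chain'_dlist r i j hij hji)
    simp only [Finset.coe_filter, Set.mem_setOf_eq, Finset.mem_powerset, DfinSet,
      Finset.mem_coe, Finset.mem_filter]
    refine ⟨?_, ?_, ?_, ?_⟩
    · intro x hx
      rw [List.mem_toFinset, mem_dlist] at hx
      obtain ⟨u, hx | hx⟩ := hx <;> subst hx <;> simp only [Finset.mem_Icc]
      · exact ⟨hpos u, le_of_lt (lt_of_lt_of_le (hij u) (hjN u))⟩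
      · exact ⟨le_of_lt (lt_of_le_of_lt (hpos u) (hij u)), hjN u⟩
    · rw [List.toFinset_card_of_nodup (hpw.imp fun {a b} h => Nat.ne_of_gt h), length_dlist]
      exact even_two_mul r
    · rw [← Finset.card_pos, List.toFinset_card_of_nodup
        (hpw.imp fun {a b} h => Nat.ne_of_gt h), length_dlist]
      have hr1 : 1 ≤ r := hr
      omega
    · rw [wS_toFinset hpw, wsum_dlist]
      exact hsum
  · -- InjOn
    rintro ⟨r, i, j⟩ hp ⟨r', i', j'⟩ hp' heq
    obtain ⟨hr, hpos, hij, hji, hjN, hsum⟩ := hp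
    obtain ⟨hr', hpos', hij', hji', hjN', hsum'⟩ := hp'
    have hpw : (dlist r i j).Pairwise (· > ·) :=
      List.isChain_iff_pairwise.mp (chain'_dlist r i j hij hji)
    have hpw' : (dlist r' i' j').Pairwise (· > ·) :=
      List.isChain_iff_pairwise.mp (chain'_dlist r' i' j' hij' hji')
    have hl : dlist r i j = dlist r' i' j' := by
      have h := congrArg (fun S : Finset ℕ => S.sort (· ≥ ·)) heq
      simpa only [sort_toFinset_of_pairwise hpw, sort_toFinset_of_pairwise hpw'] using h
    have hrr : r = r' := by
      have h := congrArg List.length hl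
      rw [length_dlist, length_dlist] at h
      omega
    subst hrr
    obtain ⟨h1, h2⟩ := dlist_inj r i j i' j' hl
    rw [h1, h2]
  · -- SurjOn
    intro S hS
    simp only [DfinSet, Finset.coe_filter, Set.mem_setOf_eq, Finset.mem_powerset,
      Finset.mem_coe, Finset.mem_filter] at hS
    obtain ⟨hsub, heven, hne, hw⟩ := hS
    have hpw := pairwise_sort_ge S
    have hchain : List.IsChain (· > ·) (S.sort (· ≥ ·)) := List.isChain_iff_pairwise.mpr hpw
    have hlen : Even (S.sort (· ≥ ·)).length := by
      rw [Finset.length_sort]; exact heven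
    obtain ⟨r, i, j, hij, hji, hd⟩ := exists_dlist _ hchain hlen
    have hmem : ∀ x : ℕ, (∃ u, x = i u ∨ x = j u) → x ∈ Finset.Icc 1 N := by
      intro x hx
      apply hsub
      have : x ∈ dlist r i j := (mem_dlist r i j x).mpr hx
      rw [hd] at this
      simpa using this
    refine ⟨⟨r, i, j⟩, ⟨?_, ?_, hij, hji, ?_, ?_⟩, ?_⟩
    · -- 1 ≤ r
      show 1 ≤ r
      have hcard : 0 < S.card := Finset.card_pos.mpr hne
      have h := congrArg List.length hd
      rw [length_dlist, Finset.length_sort] at h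
      omega
    · intro u
      show 0 < i u
      have := hmem (i u) ⟨u, Or.inl rfl⟩
      simp only [Finset.mem_Icc] at this
      omega
    · intro u
      have := hmem (j u) ⟨u, Or.inr rfl⟩
      simp only [Finset.mem_Icc] at this
      exact this.2
    · rw [← wsum_dlist, hd, ← wS]
      exact hw
    · show (dlist r i j).toFinset = S
      rw [hd, Finset.sort_toFinset]
  · -- values
    rintro ⟨r, i, j⟩ hp
    obtain ⟨hr, hpos, hij, hji, hjN, hsum⟩ := hp
    have hpw : (dlist r i j).Pairwise (· > ·) :=
      List.isChain_iff_pairwise.mp (chain'_dlist r i j hij hji)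
    rw [prod_toFinset_of_pairwise α hpw, prod_map_dlist]

theorem gammaCoeff_eq (α : ℕ → ℝ) (N n : ℕ) :
    gammaCoeff α N n = ∑ S ∈ GfinSet N n, ∏ x ∈ S, α x := by
  classical
  rw [← finsum_mem_coe_finset]
  unfold gammaCoeff
  refine finsum_mem_eq_of_bijOn (fun p => (glist p.1 p.2.1 p.2.2).toFinset) ⟨?_, ?_, ?_⟩ ?_
  · -- MapsTo
    rintro ⟨r, i, j⟩ ⟨hpos, hc, hlast, hsum⟩
    have hpw : (glist r i j).Pairwise (· > ·) :=
      List.isChain_iff_pairwise.mp (chain'_glist r i j hc)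
    simp only [GfinSet, Finset.coe_filter, Set.mem_setOf_eq, Finset.mem_powerset,
      Finset.mem_coe, Finset.mem_filter]
    have hle : ∀ x ∈ glist r i j, x ≤ i (Fin.last r) := by
      intro x hx
      rw [glist] at hx
      rcases List.mem_cons.mp hx with h | h
      · exact le_of_eq h
      · have : i (Fin.last r) > x := by
          have := (List.pairwise_cons.mp (by rw [glist] at hpw; exact hpw)).1
          exact this x h
        omega
    refine ⟨?_, ?_, ?_⟩
    · intro x hx
      have hx' := hx
      rw [List.mem_toFinset, mem_glist] at hx'
      simp only [Finset.mem_Icc]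
      constructor
      · obtain ⟨u, rfl⟩ | ⟨u, rfl⟩ := hx'
        · exact hpos u
        · have h1 : 0 < i u.castSucc := hpos u.castSucc
          have h2 : i u.castSucc < j u := (hc u).1
          omega
      · exact le_trans (hle x (List.mem_toFinset.mp hx)) hlast
    · rw [List.toFinset_card_of_nodup (hpw.imp fun {a b} h => Nat.ne_of_gt h), length_glist]
      simp [parity_simps]
    · rw [wS_toFinset hpw, wsum_glist]
      exact hsum
  · -- InjOn
    rintro ⟨r, i, j⟩ hp ⟨r', i', j'⟩ hp' heq
    obtain ⟨hpos, hc, hlast, hsum⟩ := hp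
    obtain ⟨hpos', hc', hlast', hsum'⟩ := hp'
    have hpw : (glist r i j).Pairwise (· > ·) :=
      List.isChain_iff_pairwise.mp (chain'_glist r i j hc)
    have hpw' : (glist r' i' j').Pairwise (· > ·) :=
      List.isChain_iff_pairwise.mp (chain'_glist r' i' j' hc')
    have hl : glist r i j = glist r' i' j' := by
      have h := congrArg (fun S : Finset ℕ => S.sort (· ≥ ·)) heq
      simpa only [sort_toFinset_of_pairwise hpw, sort_toFinset_of_pairwise hpw'] using h
    have hrr : r = r' := by
      have h := congrArg List.length hl
      rw [length_glist, length_glist] at h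
      omega
    subst hrr
    obtain ⟨h1, h2⟩ := glist_inj r i i' j j' hl
    rw [h1, h2]
  · -- SurjOn
    intro S hS
    simp only [GfinSet, Finset.coe_filter, Set.mem_setOf_eq, Finset.mem_powerset,
      Finset.mem_coe, Finset.mem_filter] at hS
    obtain ⟨hsub, hodd, hw⟩ := hS
    have hpw := pairwise_sort_ge S
    have hchain : List.IsChain (· > ·) (S.sort (· ≥ ·)) := List.isChain_iff_pairwise.mpr hpw
    have hlen : ¬ Even (S.sort (· ≥ ·)).length := by
      rw [Finset.length_sort]; exact hodd
    obtain ⟨r, i, j, hc, hg⟩ := exists_glist _ hchain hlen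
    have hmem : ∀ x : ℕ, ((∃ u, x = i u) ∨ ∃ u, x = j u) → x ∈ Finset.Icc 1 N := by
      intro x hx
      apply hsub
      have : x ∈ glist r i j := (mem_glist r i j x).mpr hx
      rw [hg] at this
      simpa using this
    refine ⟨⟨r, i, j⟩, ⟨?_, hc, ?_, ?_⟩, ?_⟩
    · intro u
      show 0 < i u
      have := hmem (i u) (Or.inl ⟨u, rfl⟩)
      simp only [Finset.mem_Icc] at this
      omega
    · show i (Fin.last r) ≤ N
      have := hmem (i (Fin.last r)) (Or.inl ⟨Fin.last r, rfl⟩)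
      simp only [Finset.mem_Icc] at this
      exact this.2
    · show (∑ u : Fin (r+1), (i u : ℤ)) - (∑ u : Fin r, (j u : ℤ)) = n
      rw [← wsum_glist, hg, ← wS]
      exact hw
    · show (glist r i j).toFinset = S
      rw [hg, Finset.sort_toFinset]
  · -- values
    rintro ⟨r, i, j⟩ hp
    obtain ⟨hpos, hc, hlast, hsum⟩ := hp
    have hpw : (glist r i j).Pairwise (· > ·) :=
      List.isChain_iff_pairwise.mp (chain'_glist r i j hc)
    rw [prod_toFinset_of_pairwise α hpw, prod_map_glist]

theorem Dsum_zero (α : ℕ → ℝ) {N n : ℕ} (h : n = 0 ∨ N < n) :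
    ∑ S ∈ DfinSet N n, ∏ x ∈ S, α x = 0 := by
  refine Finset.sum_eq_zero fun S hS => ?_
  simp only [DfinSet, Finset.mem_filter, Finset.mem_powerset] at hS
  obtain ⟨hsub, _, hne, hw⟩ := hS
  obtain ⟨h0, h1, h2⟩ := wS_bounds hsub
  have := h1 hne
  omega

theorem Gsum_zero (α : ℕ → ℝ) {N n : ℕ} (h : n = 0 ∨ N < n) :
    ∑ S ∈ GfinSet N n, ∏ x ∈ S, α x = 0 := by
  refine Finset.sum_eq_zero fun S hS => ?_
  simp only [GfinSet, Finset.mem_filter, Finset.mem_powerset] at hS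
  obtain ⟨hsub, hodd, hw⟩ := hS
  have hne : S.Nonempty := by
    rw [Finset.nonempty_iff_ne_empty]
    rintro rfl
    simp at hodd
  obtain ⟨h0, h1, h2⟩ := wS_bounds hsub
  have := h1 hne
  omega

theorem evenSum_one (α : ℕ → ℝ) (N : ℕ) :
    evenSum α N 1
      = 1 + ∑ n ∈ Finset.Icc 1 N, C (∑ S ∈ DfinSet N n, ∏ x ∈ S, α x) * T (n : ℤ) := by
  classical
  have h1 : evenSum α N 1
      = ∑ S ∈ (Finset.Icc 1 N).powerset.filter (fun S => Even S.card),
          C (∏ x ∈ S, α x) * T (wS S) := by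
    rw [evenSum, ← Finset.sum_filter]
    simp only [one_mul]
  rw [h1]
  set s0 := (Finset.Icc 1 N).powerset.filter (fun S => Even S.card) with hs0
  have hmemE : (∅ : Finset ℕ) ∈ s0 := by simp [hs0]
  rw [← Finset.sum_erase_add s0 _ hmemE]
  have hfE : C (∏ x ∈ (∅ : Finset ℕ), α x) * T (wS ∅) = 1 := by
    simp [wS, Finset.sort_empty]
  rw [hfE, add_comm]
  congr 1
  have hmaps : ∀ S ∈ s0.erase ∅, (wS S).toNat ∈ Finset.Icc 1 N := by
    intro S hS
    simp only [Finset.mem_erase, hs0, Finset.mem_filter, Finset.mem_powerset] at hS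
    obtain ⟨hne, hsub, _⟩ := hS
    obtain ⟨h0, h1, h2⟩ := wS_bounds hsub
    have := h1 (Finset.nonempty_iff_ne_empty.mpr hne)
    simp only [Finset.mem_Icc]
    omega
  rw [← Finset.sum_fiberwise_of_maps_to hmaps (fun S => C (∏ x ∈ S, α x) * T (wS S))]
  refine Finset.sum_congr rfl fun n hn => ?_
  simp only [Finset.mem_Icc] at hn
  have hset : (s0.erase ∅).filter (fun S => (wS S).toNat = n) = DfinSet N n := by
    ext S
    simp only [Finset.mem_filter, Finset.mem_erase, hs0, Finset.mem_powerset, DfinSet]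
    constructor
    · rintro ⟨⟨hne, hsub, heven⟩, htn⟩
      have hnonempty : S.Nonempty := Finset.nonempty_iff_ne_empty.mpr hne
      obtain ⟨h0, _, _⟩ := wS_bounds hsub
      exact ⟨hsub, heven, hnonempty, by omega⟩
    · rintro ⟨hsub, heven, hnonempty, hw⟩
      exact ⟨⟨Finset.nonempty_iff_ne_empty.mp hnonempty, hsub, heven⟩, by omega⟩
  rw [hset]
  have : ∀ S ∈ DfinSet N n, C (∏ x ∈ S, α x) * T (wS S) = C (∏ x ∈ S, α x) * T (n : ℤ) := by
    intro S hS
    simp only [DfinSet, Finset.mem_filter] at hS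
    rw [hS.2.2.2]
  rw [Finset.sum_congr rfl this, ← Finset.sum_mul, ← map_sum]

theorem oddSum_one (α : ℕ → ℝ) (N : ℕ) :
    oddSum α N 1
      = ∑ n ∈ Finset.Icc 1 N, C (∑ S ∈ GfinSet N n, ∏ x ∈ S, α x) * T (n : ℤ) := by
  classical
  have h1 : oddSum α N 1
      = ∑ S ∈ (Finset.Icc 1 N).powerset.filter (fun S => ¬ Even S.card),
          C (∏ x ∈ S, α x) * T (wS S) := by
    rw [oddSum, ← Finset.sum_filter]
    simp only [one_mul]
  rw [h1]
  set s0 := (Finset.Icc 1 N).powerset.filter (fun S => ¬ Even S.card) with hs0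
  have hmaps : ∀ S ∈ s0, (wS S).toNat ∈ Finset.Icc 1 N := by
    intro S hS
    simp only [hs0, Finset.mem_filter, Finset.mem_powerset] at hS
    obtain ⟨hsub, hodd⟩ := hS
    have hne : S.Nonempty := by
      rw [Finset.nonempty_iff_ne_empty]
      rintro rfl
      simp at hodd
    obtain ⟨h0, h1, h2⟩ := wS_bounds hsub
    have := h1 hne
    simp only [Finset.mem_Icc]
    omega
  rw [← Finset.sum_fiberwise_of_maps_to hmaps (fun S => C (∏ x ∈ S, α x) * T (wS S))]
  refine Finset.sum_congr rfl fun n hn => ?_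
  simp only [Finset.mem_Icc] at hn
  have hset : s0.filter (fun S => (wS S).toNat = n) = GfinSet N n := by
    ext S
    simp only [Finset.mem_filter, hs0, Finset.mem_powerset, GfinSet]
    constructor
    · rintro ⟨⟨hsub, hodd⟩, htn⟩
      obtain ⟨h0, _, _⟩ := wS_bounds hsub
      exact ⟨hsub, hodd, by omega⟩
    · rintro ⟨hsub, hodd, hw⟩
      exact ⟨⟨hsub, hodd⟩, by omega⟩
  rw [hset]
  have : ∀ S ∈ GfinSet N n, C (∏ x ∈ S, α x) * T (wS S) = C (∏ x ∈ S, α x) * T (n : ℤ) := by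
    intro S hS
    simp only [GfinSet, Finset.mem_filter] at hS
    rw [hS.2.2]
  rw [Finset.sum_congr rfl this, ← Finset.sum_mul, ← map_sum]

end
end
end LPAux

open LaurentPolynomial in
/-- for real `α_1, …, α_N`, the bottom-right entry of the ordered product
`[[1, α_N z^{-N}],[α_N z^N, 1]] ⋯ [[1, α_1 z^{-1}],[α_1 z, 1]]` equals `1 + Σ_{n≥1} δ_n z^n`
and the bottom-left entry equals `Σ_{n≥1} γ_n z^n`. -/
theorem laurentProd_bottom_row (N : ℕ) (hN : 1 ≤ N) (α : ℕ → ℝ) :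
    laurentProd α N 1 1
        = 1 + ∑ᶠ (n : ℕ) (_ : 1 ≤ n), C (deltaCoeff α N n) * T (n : ℤ) ∧
    laurentProd α N 1 0
        = ∑ᶠ (n : ℕ) (_ : 1 ≤ n), C (gammaCoeff α N n) * T (n : ℤ) := by
  obtain ⟨h00, h01, h10, h11⟩ := LPAux.entries α N
  constructor
  · rw [h11, LPAux.evenSum_one]
    congr 1
    have hsupp : {n : ℕ | 1 ≤ n} ∩ Function.support (fun n : ℕ => C (deltaCoeff α N n) * T (n : ℤ))
        = ↑(Finset.Icc 1 N) ∩ Function.support (fun n : ℕ => C (deltaCoeff α N n) * T (n : ℤ)) := by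
      ext n
      simp only [Set.mem_inter_iff, Set.mem_setOf_eq, Function.mem_support, Finset.coe_Icc,
        Set.mem_Icc]
      constructor
      · rintro ⟨h1, hne⟩
        refine ⟨⟨h1, ?_⟩, hne⟩
        by_contra hN'
        apply hne
        rw [LPAux.deltaCoeff_eq, LPAux.Dsum_zero α (Or.inr (by omega))]
        simp
      · rintro ⟨⟨h1, _⟩, hne⟩
        exact ⟨h1, hne⟩
    calc ∑ n ∈ Finset.Icc 1 N, C (∑ S ∈ LPAux.DfinSet N n, ∏ x ∈ S, α x) * T (n : ℤ)
        = ∑ n ∈ Finset.Icc 1 N, C (deltaCoeff α N n) * T (n : ℤ) :=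
          Finset.sum_congr rfl fun n _ => by rw [LPAux.deltaCoeff_eq]
      _ = ∑ᶠ (n : ℕ) (_ : 1 ≤ n), C (deltaCoeff α N n) * T (n : ℤ) :=
          (finsum_mem_eq_sum_of_inter_support_eq _ hsupp).symm
  · rw [h10]
    have hsupp : {n : ℕ | 1 ≤ n} ∩ Function.support (fun n : ℕ => C (gammaCoeff α N n) * T (n : ℤ))
        = ↑(Finset.Icc 1 N) ∩ Function.support (fun n : ℕ => C (gammaCoeff α N n) * T (n : ℤ)) := by
      ext n
      simp only [Set.mem_inter_iff, Set.mem_setOf_eq, Function.mem_support, Finset.coe_Icc,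
        Set.mem_Icc]
      constructor
      · rintro ⟨h1, hne⟩
        refine ⟨⟨h1, ?_⟩, hne⟩
        by_contra hN'
        apply hne
        rw [LPAux.gammaCoeff_eq, LPAux.Gsum_zero α (Or.inr (by omega))]
        simp
      · rintro ⟨⟨h1, _⟩, hne⟩
        exact ⟨h1, hne⟩
    calc LPAux.oddSum α N 1
        = ∑ n ∈ Finset.Icc 1 N, C (∑ S ∈ LPAux.GfinSet N n, ∏ x ∈ S, α x) * T (n : ℤ) :=
          LPAux.oddSum_one α N
      _ = ∑ n ∈ Finset.Icc 1 N, C (gammaCoeff α N n) * T (n : ℤ) :=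
          Finset.sum_congr rfl fun n _ => by rw [LPAux.gammaCoeff_eq]
      _ = ∑ᶠ (n : ℕ) (_ : 1 ≤ n), C (gammaCoeff α N n) * T (n : ℤ) :=
          (finsum_mem_eq_sum_of_inter_support_eq _ hsupp).symm
end
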